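/- arXiv:2004.07862 — 5 statements merged into one kernel-verified Lean document; each statement's English description precedes it below -/
import Mathlib

section
/- Let w be a real number that is not an integer, and let a > 0 and z > 0 be real numbers. Then the limit as q → 0⁺ of θ_q(z·a·q^w)/θ_q(a·q^w) exists and equals z^{−⌊w⌋ − 1/2}, where ⌊w⌋ denotes the integer part (floor) of w and q^w, z^{−⌊w⌋−1/2} denote real powers. -/
open Topology Filter

/-- The Jacobi theta function `θ_q(x) = (√x − 1/√x)·∏_{i=1}^∞ (1 − x qⁱ)(1 − qⁱ/x)`. -/
noncomputable def thetaFn (q x : ℝ) : ℝ :=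
  (Real.sqrt x - 1 / Real.sqrt x) * ∏' i : ℕ, ((1 - x * q ^ (i + 1)) * (1 - q ^ (i + 1) / x))

open Real

lemma rpow_tendsto_zero {e : ℝ} (he : 0 < e) :
    Tendsto (fun q : ℝ => q ^ e) (𝓝[>] (0:ℝ)) (𝓝 0) := by
  have h1 : Tendsto (fun q : ℝ => Real.exp (Real.log q * e)) (𝓝[>] (0:ℝ)) (𝓝 0) := by
    apply Real.tendsto_exp_atBot.comp
    exact Real.tendsto_log_nhdsGT_zero.atBot_mul_const he
  refine h1.congr' ?_
  filter_upwards [self_mem_nhdsWithin] with q hq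
  rw [Real.rpow_def_of_pos hq]

lemma one_sub_rpow_tendsto (c : ℝ) {e : ℝ} (he : 0 < e) :
    Tendsto (fun q : ℝ => 1 - c * q ^ e) (𝓝[>] (0:ℝ)) (𝓝 1) := by
  have := (tendsto_const_nhds (x := (1:ℝ)) (f := 𝓝[>] (0:ℝ))).sub
    (((rpow_tendsto_zero he).const_mul c))
  simpa using this

lemma abs_log_one_sub_le {t : ℝ} (h0 : 0 ≤ t) (h2 : t ≤ 1/2) :
    |Real.log (1 - t)| ≤ 2 * t := by
  have hpos : 0 < 1 - t := by linarith
  have hle : Real.log (1 - t) ≤ 0 := Real.log_nonpos (by linarith) (by linarith)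
  rw [abs_of_nonpos hle]
  have h3 : Real.log (1 - t)⁻¹ ≤ (1 - t)⁻¹ - 1 := Real.log_le_sub_one_of_pos (by positivity)
  rw [Real.log_inv] at h3
  have h4 : (1 - t)⁻¹ ≤ 1 + 2*t := by
    rw [inv_eq_one_div, div_le_iff₀ hpos]; nlinarith
  linarith


noncomputable def facJ (w c q : ℝ) (i : ℕ) : ℝ :=
  (1 - c * q ^ (w + i + 1)) * (1 - q ^ ((i : ℝ) + 1 - w) / c)

section Tail

variable {w c : ℝ} (hc : 0 < c) {N : ℕ} (hN : |w| + 1 ≤ N) {q : ℝ}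
  (hq : 0 < q) (hq2 : q ≤ 1/2) (hs1 : c * q^2 ≤ 1/2) (hs2 : q^2 / c ≤ 1/2)

include hc hN hq hq2 hs1 hs2

lemma facJ_u_bound (i : ℕ) : c * q ^ (w + (i + N : ℕ) + 1) ≤ (c * q^2) * q^i := by
  have hq1 : q ≤ 1 := by linarith
  have habs : -w ≤ |w| := neg_le_abs w
  have hexp : ((i:ℝ) + 2) ≤ w + (i + N : ℕ) + 1 := by
    push_cast; linarith
  have h1 : q ^ (w + (i + N : ℕ) + 1) ≤ q ^ ((i:ℝ) + 2) :=
    Real.rpow_le_rpow_of_exponent_ge hq hq1 hexp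
  have h2 : q ^ ((i:ℝ) + 2) = q^2 * q^i := by
    rw [show ((i:ℝ) + 2) = ((i + 2 : ℕ) : ℝ) by push_cast; ring, Real.rpow_natCast]
    ring
  calc c * q ^ (w + (i + N : ℕ) + 1) ≤ c * q ^ ((i:ℝ) + 2) := by
        exact mul_le_mul_of_nonneg_left h1 hc.le
    _ = (c * q^2) * q^i := by rw [h2]; ring

lemma facJ_v_bound (i : ℕ) : q ^ (((i + N : ℕ) : ℝ) + 1 - w) / c ≤ (q^2 / c) * q^i := by
  have hq1 : q ≤ 1 := by linarith
  have habs : w ≤ |w| := le_abs_self w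
  have hexp : ((i:ℝ) + 2) ≤ ((i + N : ℕ) : ℝ) + 1 - w := by push_cast; linarith
  have h1 : q ^ (((i + N : ℕ) : ℝ) + 1 - w) ≤ q ^ ((i:ℝ) + 2) :=
    Real.rpow_le_rpow_of_exponent_ge hq hq1 hexp
  have h2 : q ^ ((i:ℝ) + 2) = q^2 * q^i := by
    rw [show ((i:ℝ) + 2) = ((i + 2 : ℕ) : ℝ) by push_cast; ring, Real.rpow_natCast]
    ring
  calc q ^ (((i + N : ℕ) : ℝ) + 1 - w) / c ≤ q ^ ((i:ℝ) + 2) / c := by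
        gcongr
    _ = (q^2 / c) * q^i := by rw [h2]; ring

lemma facJ_u_pos (i : ℕ) : 0 < c * q ^ (w + (i + N : ℕ) + 1) := by
  positivity

lemma facJ_v_pos (i : ℕ) : 0 < q ^ (((i + N : ℕ) : ℝ) + 1 - w) / c := by
  positivity

lemma facJ_u_le (i : ℕ) : c * q ^ (w + (i + N : ℕ) + 1) ≤ 1/2 := by
  refine (facJ_u_bound hc hN hq hq2 hs1 hs2 i).trans ?_
  have : q^i ≤ 1 := pow_le_one₀ hq.le (by linarith)
  nlinarith [mul_pos hc (pow_pos hq 2)]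

lemma facJ_v_le (i : ℕ) : q ^ (((i + N : ℕ) : ℝ) + 1 - w) / c ≤ 1/2 := by
  refine (facJ_v_bound hc hN hq hq2 hs1 hs2 i).trans ?_
  have : q^i ≤ 1 := pow_le_one₀ hq.le (by linarith)
  nlinarith [div_pos (pow_pos hq 2) hc]

lemma facJ_tail_pos (i : ℕ) : 0 < facJ w c q (i + N) := by
  have h1 := facJ_u_le hc hN hq hq2 hs1 hs2 i
  have h2 := facJ_v_le hc hN hq hq2 hs1 hs2 i
  unfold facJ
  push_cast
  push_cast at h1 h2
  nlinarith

lemma facJ_log_bound (i : ℕ) :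
    |Real.log (facJ w c q (i + N))| ≤ (2 * (c * q^2) + 2 * (q^2/c)) * q^i := by
  have hu0 := facJ_u_pos (w := w) hc hN hq hq2 hs1 hs2 i
  have hv0 := facJ_v_pos (w := w) (c := c) hc hN hq hq2 hs1 hs2 i
  have hu2 := facJ_u_le hc hN hq hq2 hs1 hs2 i
  have hv2 := facJ_v_le hc hN hq hq2 hs1 hs2 i
  have hub := facJ_u_bound hc hN hq hq2 hs1 hs2 i
  have hvb := facJ_v_bound hc hN hq hq2 hs1 hs2 i
  set u := c * q ^ (w + (i + N : ℕ) + 1) with hu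
  set v := q ^ (((i + N : ℕ) : ℝ) + 1 - w) / c with hv
  have hfac : facJ w c q (i + N) = (1 - u) * (1 - v) := by
    unfold facJ; rw [hu, hv]
  rw [hfac, Real.log_mul (by nlinarith) (by nlinarith)]
  have b1 := abs_log_one_sub_le hu0.le hu2
  have b2 := abs_log_one_sub_le hv0.le hv2
  calc |Real.log (1-u) + Real.log (1-v)| ≤ |Real.log (1-u)| + |Real.log (1-v)| :=
        abs_add_le _ _
    _ ≤ 2*u + 2*v := by linarith
    _ ≤ (2 * (c * q^2) + 2 * (q^2/c)) * q^i := by nlinarith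

lemma facJ_summable_log : Summable (fun i => Real.log (facJ w c q (i + N))) := by
  refine Summable.of_norm_bounded (g := fun i => (2 * (c * q^2) + 2 * (q^2/c)) * q^i)
    ((summable_geometric_of_lt_one hq.le (by linarith)).mul_left _) (fun i => ?_)
  simpa [Real.norm_eq_abs] using facJ_log_bound hc hN hq hq2 hs1 hs2 i

lemma facJ_hasProd :
    HasProd (fun i => facJ w c q (i + N))
      (Real.exp (∑' i, Real.log (facJ w c q (i + N)))) := by
  have h := (facJ_summable_log hc hN hq hq2 hs1 hs2).hasSum.rexp
  have hfe : (Real.exp ∘ fun i => Real.log (facJ w c q (i + N)))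
      = fun i => facJ w c q (i + N) :=
    funext fun i => Real.exp_log (facJ_tail_pos hc hN hq hq2 hs1 hs2 i)
  rwa [hfe] at h

lemma facJ_tsum_log_bound :
    |∑' i, Real.log (facJ w c q (i + N))| ≤ (2 * (c * q^2) + 2 * (q^2/c)) * 2 := by
  have hsum := facJ_summable_log hc hN hq hq2 hs1 hs2
  have hg : Summable (fun i : ℕ => (2 * (c * q^2) + 2 * (q^2/c)) * q^i) :=
    (summable_geometric_of_lt_one hq.le (by linarith)).mul_left _
  calc |∑' i, Real.log (facJ w c q (i + N))|
      ≤ ∑' i : ℕ, (2 * (c * q^2) + 2 * (q^2/c)) * q^i := by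
        have h0 : |∑' i, Real.log (facJ w c q (i + N))|
            ≤ ∑' i, |Real.log (facJ w c q (i + N))| := by
          simpa [Real.norm_eq_abs] using
            norm_tsum_le_tsum_norm (f := fun i => Real.log (facJ w c q (i + N)))
              (by simpa [Real.norm_eq_abs] using hsum.abs)
        exact h0.trans (Summable.tsum_le_tsum (facJ_log_bound hc hN hq hq2 hs1 hs2) hsum.abs hg)
    _ = (2 * (c * q^2) + 2 * (q^2/c)) * (1 - q)⁻¹ := by
        rw [tsum_mul_left, tsum_geometric_of_lt_one hq.le (by linarith)]
    _ ≤ (2 * (c * q^2) + 2 * (q^2/c)) * 2 := by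
        have h1 : (1 - q)⁻¹ ≤ 2 := by
          rw [inv_eq_one_div, div_le_iff₀ (by linarith)]; linarith
        have h2 : 0 ≤ 2 * (c * q^2) + 2 * (q^2/c) := by positivity
        nlinarith

end Tail

lemma Qcond_eventually {c : ℝ} (hc : 0 < c) :
    ∀ᶠ q in 𝓝[>] (0:ℝ), 0 < q ∧ q ≤ 1/2 ∧ c * q^2 ≤ 1/2 ∧ q^2/c ≤ 1/2 := by
  have hid : Tendsto (fun q : ℝ => q) (𝓝[>] (0:ℝ)) (𝓝 0) :=
    tendsto_id.mono_left nhdsWithin_le_nhds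
  have h2 : Tendsto (fun q : ℝ => c * q^2) (𝓝[>] (0:ℝ)) (𝓝 0) := by
    have hcont : Continuous (fun q : ℝ => c * q^2) := by continuity
    have := hcont.tendsto 0
    simp only [mul_zero, ne_eq, OfNat.ofNat_ne_zero, not_false_eq_true, zero_pow] at this
    exact this.mono_left nhdsWithin_le_nhds
  have h3 : Tendsto (fun q : ℝ => q^2 / c) (𝓝[>] (0:ℝ)) (𝓝 0) := by
    have hcont : Continuous (fun q : ℝ => q^2 / c) := by continuity
    have := hcont.tendsto 0
    simp only [ne_eq, OfNat.ofNat_ne_zero, not_false_eq_true, zero_pow, zero_div] at this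
    exact this.mono_left nhdsWithin_le_nhds
  filter_upwards [self_mem_nhdsWithin,
    hid.eventually_le_const (by norm_num : (0:ℝ) < 1/2),
    h2.eventually_le_const (by norm_num : (0:ℝ) < 1/2),
    h3.eventually_le_const (by norm_num : (0:ℝ) < 1/2)] with q hq h1 h2 h3
  exact ⟨hq, h1, h2, h3⟩

lemma tail_tendsto {w c : ℝ} (hc : 0 < c) {N : ℕ} (hN : |w| + 1 ≤ N) :
    Tendsto (fun q => ∏' i, facJ w c q (i + N)) (𝓝[>] (0:ℝ)) (𝓝 1) := by
  have hS : Tendsto (fun q => ∑' i, Real.log (facJ w c q (i + N))) (𝓝[>] (0:ℝ)) (𝓝 0) := by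
    apply squeeze_zero_norm' (a := fun q => (2 * (c * q^2) + 2 * (q^2/c)) * 2)
    · filter_upwards [Qcond_eventually hc] with q hq
      obtain ⟨h1, h2, h3, h4⟩ := hq
      simpa [Real.norm_eq_abs] using facJ_tsum_log_bound hc hN h1 h2 h3 h4
    · have hcont : Continuous (fun q : ℝ => (2 * (c * q^2) + 2 * (q^2/c)) * 2) := by
        continuity
      have := hcont.tendsto 0
      simp only [ne_eq, OfNat.ofNat_ne_zero, not_false_eq_true, zero_pow, mul_zero,
        zero_div, add_zero, zero_mul] at this
      exact this.mono_left nhdsWithin_le_nhds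
  have hexp : Tendsto (fun q => Real.exp (∑' i, Real.log (facJ w c q (i + N))))
      (𝓝[>] (0:ℝ)) (𝓝 1) := by
    have := (Real.continuous_exp.tendsto 0).comp hS
    simpa [Function.comp_def] using this
  refine hexp.congr' ?_
  filter_upwards [Qcond_eventually hc] with q hq
  obtain ⟨h1, h2, h3, h4⟩ := hq
  exact ((facJ_hasProd hc hN h1 h2 h3 h4).tprod_eq).symm

lemma theta_eq {w c : ℝ} (hc : 0 < c) {N : ℕ} {q : ℝ} (h1 : 0 < q)
    (hmult : Multipliable (fun i => facJ w c q (i + N))) :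
    thetaFn q (c * q ^ w) = ((c * q ^ w - 1) / Real.sqrt (c * q ^ w)) *
      ((∏ i ∈ Finset.range N, facJ w c q i) * ∏' i, facJ w c q (i + N)) := by
  have hx : 0 < c * q ^ w := mul_pos hc (Real.rpow_pos_of_pos h1 w)
  have hsq : Real.sqrt (c * q ^ w) ≠ 0 := (Real.sqrt_pos.mpr hx).ne'
  unfold thetaFn
  have pref : Real.sqrt (c*q^w) - 1/Real.sqrt (c*q^w) = (c*q^w - 1)/Real.sqrt (c*q^w) := by
    rw [eq_div_iff hsq, sub_mul, Real.mul_self_sqrt hx.le, div_mul_cancel₀ _ hsq]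
  rw [pref]
  congr 1
  have hbody : ∀ i : ℕ, (1 - c*q^w * q^(i+1)) * (1 - q^(i+1)/(c*q^w)) = facJ w c q i := by
    intro i
    have e1 : (c*q^w) * q^(i+1) = c * q^(w + i + 1) := by
      rw [mul_assoc, ← Real.rpow_natCast q (i+1), ← Real.rpow_add h1]
      push_cast
      ring_nf
    have e2 : q^(i+1)/(c*q^w) = q^((i:ℝ)+1-w)/c := by
      rw [div_mul_eq_div_div_swap, ← Real.rpow_natCast q (i+1), ← Real.rpow_sub h1]
      push_cast
      ring_nf
    unfold facJ
    rw [← e1, ← e2]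
  rw [tprod_congr hbody]
  exact (hmult.prod_mul_tprod_nat_mul').symm

noncomputable def LfnJ (w z : ℝ) (i : ℕ) : ℝ :=
  if ((i:ℝ) + 1) < w then z⁻¹ else if ((i:ℝ) + 1) < -w then z else 1

lemma pre_ratio_tendsto {w a z : ℝ} (hw0 : w ≠ 0) (ha : 0 < a) (hz : 0 < z) :
    Tendsto (fun q : ℝ => ((z*a*q^w - 1)/Real.sqrt (z*a*q^w)) / ((a*q^w - 1)/Real.sqrt (a*q^w)))
      (𝓝[>] (0:ℝ)) (𝓝 ((Real.sqrt z)⁻¹ * (if 0 < w then 1 else z))) := by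
  have hzs : Real.sqrt z ≠ 0 := (Real.sqrt_pos.mpr hz).ne'
  have hkey : ∀ q : ℝ, 0 < q →
      ((z*a*q^w - 1)/Real.sqrt (z*a*q^w)) / ((a*q^w - 1)/Real.sqrt (a*q^w))
      = (Real.sqrt z)⁻¹ * ((z*a*q^w - 1)/(a*q^w - 1)) := by
    intro q hq
    have hY : 0 < a * q ^ w := mul_pos ha (Real.rpow_pos_of_pos hq w)
    have hYs : Real.sqrt (a*q^w) ≠ 0 := (Real.sqrt_pos.mpr hY).ne'
    have hX : Real.sqrt (z*a*q^w) = Real.sqrt z * Real.sqrt (a*q^w) := by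
      rw [mul_assoc, Real.sqrt_mul hz.le]
    rw [hX, div_div_div_comm, mul_div_assoc, div_self hYs, mul_one, div_eq_inv_mul]
  have hmain : Tendsto (fun q : ℝ => (Real.sqrt z)⁻¹ * ((z*a*q^w - 1)/(a*q^w - 1)))
      (𝓝[>] (0:ℝ)) (𝓝 ((Real.sqrt z)⁻¹ * (if 0 < w then 1 else z))) := by
    rcases lt_or_gt_of_ne hw0 with hwn | hwp
    · -- w < 0 : multiply by q^(-w)
      rw [if_neg (not_lt.mpr hwn.le)]
      have hratio : Tendsto (fun q : ℝ => (z*a - q^(-w))/(a - q^(-w)))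
          (𝓝[>] (0:ℝ)) (𝓝 z) := by
        have hnum : Tendsto (fun q : ℝ => z*a - q^(-w)) (𝓝[>] (0:ℝ)) (𝓝 (z*a)) := by
          have := (tendsto_const_nhds (x := z*a) (f := 𝓝[>] (0:ℝ))).sub
            (rpow_tendsto_zero (by linarith : (0:ℝ) < -w))
          simpa using this
        have hden : Tendsto (fun q : ℝ => a - q^(-w)) (𝓝[>] (0:ℝ)) (𝓝 a) := by
          have := (tendsto_const_nhds (x := a) (f := 𝓝[>] (0:ℝ))).sub
            (rpow_tendsto_zero (by linarith : (0:ℝ) < -w))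
          simpa using this
        have := hnum.div hden ha.ne'
        rw [show z*a/a = z by field_simp] at this
        exact this
      refine (tendsto_const_nhds.mul hratio).congr' ?_
      filter_upwards [self_mem_nhdsWithin] with q hq
      have hq : 0 < q := hq
      have hqw : (0:ℝ) < q^(-w) := Real.rpow_pos_of_pos hq _
      congr 1
      have hww : q^w * q^(-w) = 1 := by
        rw [← Real.rpow_add hq]; simp
      have e1 : (z*a*q^w - 1) * q^(-w) = z*a - q^(-w) := by
        linear_combination (z*a) * hww
      have e2 : (a*q^w - 1) * q^(-w) = a - q^(-w) := by
        linear_combination a * hww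
      rw [← e1, ← e2, mul_div_mul_right _ _ hqw.ne']
    · rw [if_pos hwp]
      have hnum : Tendsto (fun q : ℝ => z*a*q^w - 1) (𝓝[>] (0:ℝ)) (𝓝 (-1)) := by
        have := ((rpow_tendsto_zero hwp).const_mul (z*a)).sub
          (tendsto_const_nhds (x := (1:ℝ)))
        simpa using this
      have hden : Tendsto (fun q : ℝ => a*q^w - 1) (𝓝[>] (0:ℝ)) (𝓝 (-1)) := by
        have := ((rpow_tendsto_zero hwp).const_mul a).sub
          (tendsto_const_nhds (x := (1:ℝ)))
        simpa using this
      have := hnum.div hden (by norm_num)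
      norm_num at this
      simpa using tendsto_const_nhds.mul this
  refine hmain.congr' ?_
  filter_upwards [self_mem_nhdsWithin] with q hq
  exact (hkey q hq).symm

lemma fac_one_tendsto {w c : ℝ} {i : ℕ} (h1 : (0:ℝ) < w + i + 1) (h2 : (0:ℝ) < (i:ℝ) + 1 - w) :
    Tendsto (fun q => facJ w c q i) (𝓝[>] (0:ℝ)) (𝓝 1) := by
  unfold facJ
  have ht2 : Tendsto (fun q : ℝ => 1 - q ^ ((i:ℝ) + 1 - w) / c) (𝓝[>] (0:ℝ)) (𝓝 1) := by
    have := (tendsto_const_nhds (x := (1:ℝ)) (f := 𝓝[>] (0:ℝ))).sub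
      ((rpow_tendsto_zero h2).div_const c)
    simpa using this
  have := (one_sub_rpow_tendsto c h1).mul ht2
  simpa using this

lemma fac_ratio_tendsto {w : ℝ} (hw : ∀ n : ℤ, w ≠ n) {a z : ℝ} (ha : 0 < a) (hz : 0 < z)
    (i : ℕ) :
    Tendsto (fun q => facJ w (z*a) q i / facJ w a q i) (𝓝[>] (0:ℝ)) (𝓝 (LfnJ w z i)) := by
  have hne1 : ((i:ℝ)+1) ≠ w := by
    intro h; exact hw ((i:ℤ)+1) (by push_cast; linarith)
  have hne2 : ((i:ℝ)+1) ≠ -w := by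
    intro h; exact hw (-(i:ℤ)-1) (by push_cast; linarith)
  have hi0 : (0:ℝ) ≤ (i:ℝ) := Nat.cast_nonneg i
  have hza : 0 < z*a := mul_pos hz ha
  by_cases hc1 : ((i:ℝ)+1) < w
  · unfold LfnJ
    rw [if_pos hc1]
    have hw1 : (0:ℝ) < w + i + 1 := by linarith
    have he : (0:ℝ) < w - ((i:ℝ)+1) := by linarith
    have key : ∀ (c q : ℝ), 0 < q → facJ w c q i
        = q^((i:ℝ)+1-w) * ((q^(w - ((i:ℝ)+1)) - 1/c) * (1 - c*q^(w + i + 1))) := by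
      intro c q hq
      have h0 : q^((i:ℝ)+1-w) * q^(w - ((i:ℝ)+1)) = 1 := by
        rw [← Real.rpow_add hq]; norm_num
      have hrw : q^((i:ℝ)+1-w) * (q^(w-((i:ℝ)+1)) - 1/c) = 1 - q^((i:ℝ)+1-w)/c := by
        rw [mul_sub, h0]; ring
      unfold facJ
      rw [show q^((i:ℝ)+1-w) * ((q^(w - ((i:ℝ)+1)) - 1/c) * (1 - c*q^(w + i + 1)))
        = (q^((i:ℝ)+1-w) * (q^(w-((i:ℝ)+1)) - 1/c)) * (1 - c*q^(w + i + 1)) by ring, hrw]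
      ring
    have hnum : Tendsto (fun q : ℝ => (q^(w - ((i:ℝ)+1)) - 1/(z*a)) * (1 - (z*a)*q^(w + i + 1)))
        (𝓝[>] (0:ℝ)) (𝓝 ((0 - 1/(z*a)) * 1)) :=
      (((rpow_tendsto_zero he).sub_const _)).mul (one_sub_rpow_tendsto _ hw1)
    have hden : Tendsto (fun q : ℝ => (q^(w - ((i:ℝ)+1)) - 1/a) * (1 - a*q^(w + i + 1)))
        (𝓝[>] (0:ℝ)) (𝓝 ((0 - 1/a) * 1)) :=
      (((rpow_tendsto_zero he).sub_const _)).mul (one_sub_rpow_tendsto _ hw1)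
    have hdiv := hnum.div hden (by
      rw [mul_one]
      intro h
      have : (1:ℝ)/a ≠ 0 := by positivity
      simp only [zero_sub, neg_eq_zero] at h
      exact this h)
    have hval : ((0 - 1/(z*a)) * 1)/((0 - 1/a) * 1) = z⁻¹ := by
      field_simp; ring
    rw [hval] at hdiv
    refine hdiv.congr' ?_
    filter_upwards [self_mem_nhdsWithin] with q hq
    have hq : (0:ℝ) < q := hq
    simp only [Pi.div_apply]
    rw [key (z*a) q hq, key a q hq,
      mul_div_mul_left _ _ (Real.rpow_pos_of_pos hq ((i:ℝ)+1-w)).ne']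
  · by_cases hc2 : ((i:ℝ)+1) < -w
    · unfold LfnJ
      rw [if_neg hc1, if_pos hc2]
      have hw1 : (0:ℝ) < -(w + i + 1) := by linarith
      have he : (0:ℝ) < (i:ℝ) + 1 - w := by linarith
      have key : ∀ (c q : ℝ), 0 < q → facJ w c q i
          = q^(w + i + 1) * ((q^(-(w + (i:ℝ) + 1)) - c) * (1 - q^((i:ℝ)+1-w)/c)) := by
        intro c q hq
        have h0 : q^(w + (i:ℝ) + 1) * q^(-(w + (i:ℝ) + 1)) = 1 := by
          rw [← Real.rpow_add hq, show w + (i:ℝ) + 1 + -(w + (i:ℝ) + 1) = (0:ℝ) by ring,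
            Real.rpow_zero]
        have hrw : q^(w + (i:ℝ) + 1) * (q^(-(w + (i:ℝ) + 1)) - c) = 1 - c*q^(w + (i:ℝ) + 1) := by
          rw [mul_sub, h0]; ring
        unfold facJ
        rw [show q^(w + (i:ℝ) + 1) * ((q^(-(w + (i:ℝ) + 1)) - c) * (1 - q^((i:ℝ)+1-w)/c))
          = (q^(w + (i:ℝ) + 1) * (q^(-(w + (i:ℝ) + 1)) - c)) * (1 - q^((i:ℝ)+1-w)/c) by ring,
          hrw]
      have h2nd : ∀ c : ℝ, Tendsto (fun q : ℝ => 1 - q ^ ((i:ℝ) + 1 - w) / c)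
          (𝓝[>] (0:ℝ)) (𝓝 1) := by
        intro c
        have := (tendsto_const_nhds (x := (1:ℝ)) (f := 𝓝[>] (0:ℝ))).sub
          ((rpow_tendsto_zero he).div_const c)
        simpa using this
      have hnum : Tendsto (fun q : ℝ => (q^(-(w + (i:ℝ) + 1)) - z*a) * (1 - q^((i:ℝ)+1-w)/(z*a)))
          (𝓝[>] (0:ℝ)) (𝓝 ((0 - z*a) * 1)) := by
        refine (((rpow_tendsto_zero ?_).sub_const _)).mul (h2nd _)
        linarith
      have hden : Tendsto (fun q : ℝ => (q^(-(w + (i:ℝ) + 1)) - a) * (1 - q^((i:ℝ)+1-w)/a))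
          (𝓝[>] (0:ℝ)) (𝓝 ((0 - a) * 1)) := by
        refine (((rpow_tendsto_zero ?_).sub_const _)).mul (h2nd _)
        linarith
      have hdiv := hnum.div hden (by
        rw [mul_one, zero_sub]
        exact neg_ne_zero.mpr ha.ne')
      have hval : ((0 - z*a) * 1)/((0 - a) * 1) = z := by
        field_simp
        rw [zero_sub, zero_sub, neg_div_neg_eq, mul_div_assoc, div_self ha.ne', mul_one]
      rw [hval] at hdiv
      refine hdiv.congr' ?_
      filter_upwards [self_mem_nhdsWithin] with q hq
      have hq : (0:ℝ) < q := hq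
      simp only [Pi.div_apply]
      rw [key (z*a) q hq, key a q hq,
        mul_div_mul_left _ _ (Real.rpow_pos_of_pos hq (w + (i:ℝ) + 1)).ne']
    · unfold LfnJ
      rw [if_neg hc1, if_neg hc2]
      have hb1 : (0:ℝ) < w + i + 1 := by
        rcases lt_or_eq_of_le (not_lt.mp hc2) with h | h
        · linarith
        · exact absurd h.symm hne2
      have hb2 : (0:ℝ) < (i:ℝ) + 1 - w := by
        rcases lt_or_eq_of_le (not_lt.mp hc1) with h | h
        · linarith
        · exact absurd h (Ne.symm hne1)
      have := (fac_one_tendsto (c := z*a) hb1 hb2).div (fac_one_tendsto (c := a) hb1 hb2)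
        one_ne_zero
      simpa [Pi.div_def] using this

lemma div_helperJ (A B F G T S : ℝ) : (A/B * (F/G)) * (T/S) = (A*(F*T))/(B*(G*S)) := by
  field_simp

lemma prod_ite_lt (N m : ℕ) (hm : m ≤ N) (c : ℝ) :
    ∏ i ∈ Finset.range N, (if i < m then c else 1) = c^m := by
  rw [← Finset.prod_filter]
  have : (Finset.range N).filter (fun i => i < m) = Finset.range m := by
    ext i
    simp only [Finset.mem_filter, Finset.mem_range]
    omega
  rw [this, Finset.prod_const, Finset.card_range]

/-- For `w ∉ ℤ` and `a, z > 0`, the limit as `q → 0⁺` of `θ_q(z·a·q^w)/θ_q(a·q^w)`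
exists and equals `z^{−⌊w⌋ − 1/2}`. -/
theorem thetaFn_ratio_limit_nonintegral (w : ℝ) (hw : ∀ n : ℤ, w ≠ n)
    (a z : ℝ) (ha : 0 < a) (hz : 0 < z) :
    Tendsto (fun q : ℝ => thetaFn q (z * a * q ^ w) / thetaFn q (a * q ^ w))
      (𝓝[>] (0 : ℝ)) (𝓝 (z ^ (-(⌊w⌋ : ℝ) - 1 / 2))) := by
  have hza : 0 < z * a := mul_pos hz ha
  have hw0 : w ≠ 0 := by simpa using hw 0
  have hfl : ((⌊w⌋ : ℤ) : ℝ) < w := lt_of_le_of_ne (Int.floor_le w) (Ne.symm (hw ⌊w⌋))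
  have hfu : w < (⌊w⌋ : ℝ) + 1 := Int.lt_floor_add_one w
  set N : ℕ := ⌊|w|⌋.toNat + 2 with hNdef
  have habs0 : (0:ℤ) ≤ ⌊|w|⌋ := Int.floor_nonneg.mpr (abs_nonneg w)
  have hNcast : (N:ℝ) = ((⌊|w|⌋ : ℤ) : ℝ) + 2 := by
    have hcast : ((⌊|w|⌋.toNat : ℕ) : ℝ) = ((⌊|w|⌋ : ℤ) : ℝ) := by
      exact_mod_cast congrArg (Int.cast : ℤ → ℝ) (Int.toNat_of_nonneg habs0)
    rw [hNdef]
    push_cast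
    rw [hcast]
  have hNR : |w| + 1 ≤ (N:ℝ) := by
    have h1 : |w| < (⌊|w|⌋ : ℝ) + 1 := Int.lt_floor_add_one _
    rw [hNcast]; linarith
  have hpre := pre_ratio_tendsto (a := a) (z := z) (w := w) hw0 ha hz
  have hprod : Tendsto (fun q => ∏ i ∈ Finset.range N, (facJ w (z*a) q i / facJ w a q i))
      (𝓝[>] (0:ℝ)) (𝓝 (∏ i ∈ Finset.range N, LfnJ w z i)) :=
    tendsto_finset_prod _ (fun i _ => fac_ratio_tendsto hw ha hz i)
  have htail := (tail_tendsto hza hNR).div (tail_tendsto ha hNR) one_ne_zero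
  have hRHS := (hpre.mul hprod).mul htail
  have hev : (fun q : ℝ => ((z*a*q^w - 1)/Real.sqrt (z*a*q^w) / ((a*q^w - 1)/Real.sqrt (a*q^w))
        * ∏ i ∈ Finset.range N, (facJ w (z*a) q i / facJ w a q i))
        * ((∏' i, facJ w (z*a) q (i+N)) / (∏' i, facJ w a q (i+N))))
      =ᶠ[𝓝[>] (0:ℝ)] (fun q => thetaFn q (z*a*q^w) / thetaFn q (a*q^w)) := by
    filter_upwards [Qcond_eventually hza, Qcond_eventually ha] with q hQ1 hQ2
    obtain ⟨u1,u2,u3,u4⟩ := hQ1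
    obtain ⟨v1,v2,v3,v4⟩ := hQ2
    rw [theta_eq hza u1 ⟨_, facJ_hasProd hza hNR u1 u2 u3 u4⟩,
        theta_eq ha v1 ⟨_, facJ_hasProd ha hNR v1 v2 v3 v4⟩,
        Finset.prod_div_distrib]
    exact div_helperJ _ _ _ _ _ _
  have hval : (Real.sqrt z)⁻¹ * (if 0 < w then 1 else z) * (∏ i ∈ Finset.range N, LfnJ w z i)
      * (1/1) = z ^ (-(⌊w⌋ : ℝ) - 1/2) := by
    have hsqrt : Real.sqrt z = z ^ ((1:ℝ)/2) := Real.sqrt_eq_rpow z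
    rcases lt_or_gt_of_ne hw0 with hneg | hpos
    · -- w < 0
      have hflneg : ⌊w⌋ < 0 := by
        have : ((⌊w⌋:ℤ):ℝ) < 0 := lt_trans hfl hneg
        exact_mod_cast this
      set m : ℕ := (-⌊w⌋ - 1).toNat with hm
      have hmz : ((m:ℕ):ℤ) = -⌊w⌋ - 1 := Int.toNat_of_nonneg (by omega)
      have hmr : ((m:ℕ):ℝ) = -((⌊w⌋:ℤ):ℝ) - 1 := by exact_mod_cast congrArg (Int.cast : ℤ → ℝ) hmz
      have hcond : ∀ i : ℕ, LfnJ w z i = if i < m then z else 1 := by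
        intro i
        have hi0 : (0:ℝ) ≤ (i:ℝ) := Nat.cast_nonneg i
        unfold LfnJ
        rw [if_neg (by linarith)]
        by_cases hi : i < m
        · rw [if_pos ?_, if_pos hi]
          have h1 : ((i:ℝ) + 1) ≤ (m:ℝ) := by exact_mod_cast hi
          linarith [hmr, hfu]
        · rw [if_neg ?_, if_neg hi]
          have h1 : (m:ℝ) ≤ (i:ℝ) := by exact_mod_cast not_lt.mp hi
          intro hcontra
          have : -w ≤ (m:ℝ) + 1 := by linarith [hfl]
          linarith
      have hm_le : m ≤ N := by
        have h1 : ((m:ℕ):ℝ) ≤ |w| := by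
          rw [hmr]
          have : -w ≤ |w| := neg_le_abs w
          linarith [hfu]
        have h2 : ((m:ℕ):ℤ) ≤ ⌊|w|⌋ := Int.le_floor.mpr (by exact_mod_cast h1)
        omega
      rw [Finset.prod_congr rfl (fun i _ => hcond i), prod_ite_lt N m hm_le z,
        if_neg (not_lt.mpr hneg.le)]
      have hexp : -(((⌊w⌋:ℤ)):ℝ) - 1/2 = ((m:ℝ) + 1) + -(1/2) := by rw [hmr]; ring
      rw [hexp, Real.rpow_add hz, Real.rpow_add hz, Real.rpow_natCast, Real.rpow_one,
        Real.rpow_neg hz.le, ← hsqrt]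
      ring
    · -- 0 < w
      have hflnn : 0 ≤ ⌊w⌋ := Int.floor_nonneg.mpr hpos.le
      set m : ℕ := ⌊w⌋.toNat with hm
      have hmz : ((m:ℕ):ℤ) = ⌊w⌋ := Int.toNat_of_nonneg hflnn
      have hmr : ((m:ℕ):ℝ) = ((⌊w⌋:ℤ):ℝ) := by exact_mod_cast congrArg (Int.cast : ℤ → ℝ) hmz
      have hcond : ∀ i : ℕ, LfnJ w z i = if i < m then z⁻¹ else 1 := by
        intro i
        have hi0 : (0:ℝ) ≤ (i:ℝ) := Nat.cast_nonneg i
        unfold LfnJ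
        by_cases hi : i < m
        · rw [if_pos ?_, if_pos hi]
          have h1 : ((i:ℝ) + 1) ≤ (m:ℝ) := by exact_mod_cast hi
          linarith [hfl]
        · rw [if_neg ?_, if_neg ?_, if_neg hi]
          · intro hcontra
            linarith
          · have h1 : (m:ℝ) ≤ (i:ℝ) := by exact_mod_cast not_lt.mp hi
            intro hcontra
            have : w ≤ (m:ℝ) + 1 := by linarith [hfu]
            linarith
      have hm_le : m ≤ N := by
        have h1 : ((m:ℕ):ℝ) ≤ |w| := by
          rw [hmr]
          have : w ≤ |w| := le_abs_self w
          linarith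
        have h2 : ((m:ℕ):ℤ) ≤ ⌊|w|⌋ := Int.le_floor.mpr (by exact_mod_cast h1)
        omega
      rw [Finset.prod_congr rfl (fun i _ => hcond i), prod_ite_lt N m hm_le z⁻¹, if_pos hpos]
      have hexp : -(((⌊w⌋:ℤ)):ℝ) - 1/2 = (-(m:ℝ)) + -(1/2) := by rw [hmr]; ring
      rw [hexp, Real.rpow_add hz, Real.rpow_neg hz.le, Real.rpow_natCast,
        Real.rpow_neg hz.le, ← hsqrt, inv_pow]
      ring
  rw [hval] at hRHS
  exact hRHS.congr' hev
end

section
/- Let w be an integer, and let a > 0 and z > 0 be real numbers with a ≠ 1. Then the limit as q → 0⁺ of θ_q(z·a·q^w)/θ_q(a·q^w) exists and equals ((1 − a·z)/(1 − a))·z^{−w − 1/2}, where z^{−w−1/2} denotes the real power. -/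
open Topology Filter

set_option maxHeartbeats 1000000


lemma abs_log_le' {t : ℝ} (h1 : 1/2 ≤ t) (h2 : t ≤ 1) : |Real.log t| ≤ 2*(1 - t) := by
  have ht : 0 < t := by linarith
  have hl : Real.log t ≤ 0 := Real.log_nonpos ht.le h2
  rw [abs_of_nonpos hl]
  have := Real.log_le_sub_one_of_pos (x := t⁻¹) (by positivity)
  rw [Real.log_inv] at this
  have h3 : t⁻¹ - 1 ≤ 2*(1-t) := by
    have : t⁻¹ ≤ 2 := by
      rw [inv_le_iff_one_le_mul₀ ht]; linarith
    have ht' : t * t⁻¹ = 1 := mul_inv_cancel₀ ht.ne'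
    nlinarith
  linarith

noncomputable def gg (A B : ℝ) (d e : ℕ) (q : ℝ) (i : ℕ) : ℝ :=
  (1 - A*q^(d+i+1)) * (1 - B*q^(e+i+1))

lemma gg_pos (A B : ℝ) (hA : 0 ≤ A) (hB : 0 ≤ B) (d e : ℕ) {q : ℝ}
    (hq0 : 0 < q) (hq1 : q ≤ 1) (h1 : A*q ≤ 1/2) (h2 : B*q ≤ 1/2) (i : ℕ) :
    1/2 ≤ 1 - A*q^(d+i+1) ∧ 1/2 ≤ 1 - B*q^(e+i+1) ∧ 0 < gg A B d e q i := by
  have key : ∀ (C : ℝ), 0 ≤ C → C*q ≤ 1/2 → ∀ k : ℕ, C*q^(k+1) ≤ 1/2 := by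
    intro C hC hCq k
    have : q^(k+1) ≤ q^1 := pow_le_pow_of_le_one hq0.le hq1 (by omega)
    have : C*q^(k+1) ≤ C*q := by
      calc C*q^(k+1) ≤ C*q^1 := by exact mul_le_mul_of_nonneg_left this hC
      _ = C*q := by ring
    linarith
  have hA' := key A hA h1 (d+i)
  have hB' := key B hB h2 (e+i)
  refine ⟨by linarith [hA'], by linarith [hB'], ?_⟩
  unfold gg
  have : (0:ℝ) < 1 - A*q^(d+i+1) := by linarith
  have : (0:ℝ) < 1 - B*q^(e+i+1) := by nlinarith
  nlinarith

section
variable (A B : ℝ) (hA : 0 ≤ A) (hB : 0 ≤ B) (d e : ℕ) {q : ℝ}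
  (hq0 : 0 < q) (hq1 : q < 1) (h1 : A*q ≤ 1/2) (h2 : B*q ≤ 1/2)

include hA hB hq0 hq1 h1 h2

lemma gg_log_bound (i : ℕ) : |Real.log (gg A B d e q i)| ≤ (2*A + 2*B) * q^(i+1) := by
  obtain ⟨hfa, hfb, _⟩ := gg_pos A B hA hB d e hq0 hq1.le h1 h2 i
  have hpa : (0:ℝ) < 1 - A*q^(d+i+1) := by linarith
  have hpb : (0:ℝ) < 1 - B*q^(e+i+1) := by linarith
  unfold gg
  rw [Real.log_mul hpa.ne' hpb.ne']
  have l1 := abs_log_le' (t := 1 - A*q^(d+i+1)) hfa (by nlinarith [pow_pos hq0 (d+i+1)])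
  have l2 := abs_log_le' (t := 1 - B*q^(e+i+1)) hfb (by nlinarith [pow_pos hq0 (e+i+1)])
  have p1 : q^(d+i+1) ≤ q^(i+1) := pow_le_pow_of_le_one hq0.le hq1.le (by omega)
  have p2 : q^(e+i+1) ≤ q^(i+1) := pow_le_pow_of_le_one hq0.le hq1.le (by omega)
  calc |Real.log (1 - A*q^(d+i+1)) + Real.log (1 - B*q^(e+i+1))|
      ≤ |Real.log (1 - A*q^(d+i+1))| + |Real.log (1 - B*q^(e+i+1))| := abs_add_le _ _
    _ ≤ 2*(A*q^(d+i+1)) + 2*(B*q^(e+i+1)) := by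
        rw [show (1:ℝ) - (1 - A*q^(d+i+1)) = A*q^(d+i+1) by ring] at l1
        rw [show (1:ℝ) - (1 - B*q^(e+i+1)) = B*q^(e+i+1) by ring] at l2
        linarith
    _ ≤ (2*A + 2*B) * q^(i+1) := by
        nlinarith [mul_le_mul_of_nonneg_left p1 hA, mul_le_mul_of_nonneg_left p2 hB]

lemma gg_summable_log : Summable (fun i : ℕ => Real.log (gg A B d e q i)) := by
  have hgeo : Summable (fun i : ℕ => (2*A + 2*B) * q^(i+1)) := by
    have : Summable (fun i : ℕ => q^(i+1)) := by
      have := (summable_geometric_of_lt_one hq0.le hq1).mul_left q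
      exact this.congr (by intro i; ring)
    exact this.mul_left _
  apply Summable.of_norm_bounded hgeo
  intro i
  exact gg_log_bound A B hA hB d e hq0 hq1 h1 h2 i

lemma gg_hasProd : HasProd (gg A B d e q) (Real.exp (∑' i : ℕ, Real.log (gg A B d e q i))) := by
  have hpos : ∀ i, 0 < gg A B d e q i := fun i => (gg_pos A B hA hB d e hq0 hq1.le h1 h2 i).2.2
  have hs := gg_summable_log A B hA hB d e hq0 hq1 h1 h2
  exact HasProd.congr_fun (hs.hasSum.rexp) (fun i => (Real.exp_log (hpos i)).symm)

lemma gg_tprod_eq : ∏' i : ℕ, gg A B d e q i = Real.exp (∑' i : ℕ, Real.log (gg A B d e q i)) := by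
  have h := gg_hasProd A B hA hB d e hq0 hq1 h1 h2
  exact h.tprod_eq

lemma gg_tsum_bound : |∑' i : ℕ, Real.log (gg A B d e q i)| ≤ (2*A+2*B) * (q/(1-q)) := by
  have hs := gg_summable_log A B hA hB d e hq0 hq1 h1 h2
  have hgs : Summable (fun i : ℕ => q^(i+1)) := by
    have := (summable_geometric_of_lt_one hq0.le hq1).mul_left q
    exact this.congr (by intro i; ring)
  have hgv : ∑' i : ℕ, q^(i+1) = q/(1-q) := by
    have h : (fun i : ℕ => q^(i+1)) = fun i : ℕ => q * q^i := by funext i; ring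
    rw [h, tsum_mul_left, tsum_geometric_of_lt_one hq0.le hq1, div_eq_mul_inv]
  have hsn : Summable (fun i : ℕ => ‖Real.log (gg A B d e q i)‖) := by
    simpa only [Real.norm_eq_abs] using hs.abs
  have step1' := norm_tsum_le_tsum_norm hsn
  simp only [Real.norm_eq_abs] at step1'
  have step1 : |∑' i : ℕ, Real.log (gg A B d e q i)| ≤ ∑' i : ℕ, |Real.log (gg A B d e q i)| := step1'
  have step2 : ∑' i : ℕ, |Real.log (gg A B d e q i)| ≤ ∑' i : ℕ, (2*A+2*B) * q^(i+1) :=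
    Summable.tsum_le_tsum (fun i => gg_log_bound A B hA hB d e hq0 hq1 h1 h2 i) hs.abs (hgs.mul_left _)
  have step3 : ∑' i : ℕ, (2*A+2*B) * q^(i+1) = (2*A+2*B) * (q/(1-q)) := by
    rw [tsum_mul_left, hgv]
  linarith

end

lemma gg_tendsto_one (A B : ℝ) (hA : 0 ≤ A) (hB : 0 ≤ B) (d e : ℕ) :
    Tendsto (fun q : ℝ => ∏' i : ℕ, gg A B d e q i) (𝓝[>] 0) (𝓝 1) := by
  set δ : ℝ := min (1/2) (min (1/(2*(A+1))) (1/(2*(B+1)))) with hδ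
  have hδpos : 0 < δ := by
    apply lt_min (by norm_num) (lt_min (by positivity) (by positivity))
  have hmem : ∀ᶠ q in 𝓝[>] (0:ℝ), q ∈ Set.Ioo (0:ℝ) δ := by
    apply Ioo_mem_nhdsGT_of_mem; exact ⟨le_refl _, hδpos⟩
  have hcond : ∀ q : ℝ, q ∈ Set.Ioo (0:ℝ) δ → 0 < q ∧ q < 1 ∧ A*q ≤ 1/2 ∧ B*q ≤ 1/2 := by
    intro q ⟨hq0, hqδ⟩
    have h1 : q < 1/2 := lt_of_lt_of_le hqδ (min_le_left _ _)
    have h2 : q < 1/(2*(A+1)) := lt_of_lt_of_le hqδ ((min_le_right _ _).trans (min_le_left _ _))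
    have h3 : q < 1/(2*(B+1)) := lt_of_lt_of_le hqδ ((min_le_right _ _).trans (min_le_right _ _))
    refine ⟨hq0, by linarith, ?_, ?_⟩
    · have : q * (2*(A+1)) < 1 := by
        rw [lt_div_iff₀ (by positivity)] at h2; linarith
      nlinarith
    · have : q * (2*(B+1)) < 1 := by
        rw [lt_div_iff₀ (by positivity)] at h3; linarith
      nlinarith
  -- tsum of logs tends to 0
  have htsum : Tendsto (fun q : ℝ => ∑' i : ℕ, Real.log (gg A B d e q i)) (𝓝[>] 0) (𝓝 0) := by
    apply squeeze_zero_norm' (a := fun q : ℝ => (2*A+2*B) * (q/(1-q)))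
    · filter_upwards [hmem] with q hq
      obtain ⟨hq0, hq1, h1, h2⟩ := hcond q hq
      simpa [Real.norm_eq_abs] using gg_tsum_bound A B hA hB d e hq0 hq1 h1 h2
    · have : Tendsto (fun q : ℝ => (2*A+2*B) * (q/(1-q))) (𝓝 0) (𝓝 ((2*A+2*B) * (0/(1-0)))) := by
        apply Tendsto.mul tendsto_const_nhds
        exact Tendsto.div tendsto_id (tendsto_const_nhds.sub tendsto_id) (by norm_num)
      simp only [zero_div, mul_zero] at this
      exact this.mono_left nhdsWithin_le_nhds
  have : Tendsto (fun q : ℝ => Real.exp (∑' i : ℕ, Real.log (gg A B d e q i))) (𝓝[>] 0) (𝓝 (Real.exp 0)) :=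
    (Real.continuous_exp.tendsto 0).comp htsum
  rw [Real.exp_zero] at this
  apply this.congr'
  filter_upwards [hmem] with q hq
  obtain ⟨hq0, hq1, h1, h2⟩ := hcond q hq
  exact (gg_tprod_eq A B hA hB d e hq0 hq1 h1 h2).symm

-- A1
lemma A1 (n : ℕ) (c q : ℝ) (hc : 0 < c) (hq0 : 0 < q) :
    q ^ ((n:ℝ)/2) * (Real.sqrt (c*q^n) - 1/Real.sqrt (c*q^n))
      = Real.sqrt c * q^n - 1/Real.sqrt c := by
  have hsc : 0 < Real.sqrt c := Real.sqrt_pos.2 hc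
  have hsq : 0 < Real.sqrt q := Real.sqrt_pos.2 hq0
  have hq2 : q ^ ((n:ℝ)/2) = (Real.sqrt q)^n := by
    rw [← Real.rpow_natCast (Real.sqrt q) n, Real.sqrt_eq_rpow, ← Real.rpow_mul hq0.le]
    ring_nf
  have hpow : Real.sqrt (q^n) = (Real.sqrt q)^n := by
    rw [show (q^n) = q^((n:ℝ)) from (Real.rpow_natCast q n).symm, Real.sqrt_eq_rpow,
      ← Real.rpow_mul hq0.le, show (n:ℝ)*(1/2) = (n:ℝ)/2 by ring, hq2]
  have hx : Real.sqrt (c*q^n) = Real.sqrt c * (Real.sqrt q)^n := by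
    rw [Real.sqrt_mul hc.le, hpow]
  rw [hx, hq2]
  set t := (Real.sqrt q)^n with htdef
  have htpos : 0 < t := pow_pos hsq n
  have ht : t*t = q^n := by rw [htdef, ← mul_pow, Real.mul_self_sqrt hq0.le]
  calc t * (Real.sqrt c * t - 1/(Real.sqrt c * t))
      = Real.sqrt c * (t*t) - t/(Real.sqrt c * t) := by ring
    _ = Real.sqrt c * q^n - 1/Real.sqrt c := by
        rw [ht, mul_comm (Real.sqrt c) t, show t/(t*Real.sqrt c) = (t*1)/(t*Real.sqrt c) by rw [mul_one],
          mul_div_mul_left _ _ htpos.ne']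

-- A2 termwise
lemma A2 (n i : ℕ) (c q : ℝ) (hc : 0 < c) (hq0 : 0 < q) (hi : i < n) :
    q^(n-1-i) * ((1 - (c*q^n)*q^(i+1)) * (1 - q^(i+1)/(c*q^n)))
      = (1 - c*q^(n+i+1)) * (q^(n-1-i) - 1/c) := by
  have hni : (n-1-i) + (i+1) = n := by omega
  have e1 : q ^ (n-1-i) * q^(i+1) = q^n := by rw [← pow_add, hni]
  have e2 : (c*q^n)*q^(i+1) = c*q^(n+i+1) := by
    rw [mul_assoc, ← pow_add, show n + (i+1) = n+i+1 by omega]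
  have hqn : q^n ≠ 0 := (pow_pos hq0 n).ne'
  have k1 : q^(n-1-i) * (1 - q^(i+1)/(c*q^n)) = q^(n-1-i) - 1/c := by
    rw [mul_sub, mul_one, mul_div_assoc', e1, mul_comm c (q^n),
      show q^n/(q^n*c) = (q^n*1)/(q^n*c) by rw [mul_one], mul_div_mul_left _ _ hqn]
  calc q^(n-1-i) * ((1 - (c*q^n)*q^(i+1)) * (1 - q^(i+1)/(c*q^n)))
      = (1 - (c*q^n)*q^(i+1)) * (q^(n-1-i) * (1 - q^(i+1)/(c*q^n))) := by ring
    _ = (1 - c*q^(n+i+1)) * (q^(n-1-i) - 1/c) := by rw [k1, e2]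

lemma theta_asymp (n : ℕ) (c : ℝ) (hc : 0 < c) :
    Tendsto (fun q : ℝ => q ^ ((n:ℝ)/2 + ((∑ i ∈ Finset.range n, (n-1-i) : ℕ) : ℝ))
        * thetaFn q (c * q ^ (n:ℝ)))
      (𝓝[>] 0)
      (𝓝 ((Real.sqrt c * 0^n - 1/Real.sqrt c)
        * ∏ i ∈ Finset.range n, ((0:ℝ)^(n-1-i) - 1/c))) := by
  set m : ℕ := ∑ i ∈ Finset.range n, (n-1-i) with hm
  set δ : ℝ := min (1/2) (min (1/(2*(c+1))) (1/(2*(1/c+1)))) with hδ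
  have hδpos : 0 < δ := by
    apply lt_min (by norm_num) (lt_min (by positivity) (by positivity))
  have hmem : ∀ᶠ q in 𝓝[>] (0:ℝ), q ∈ Set.Ioo (0:ℝ) δ :=
    Ioo_mem_nhdsGT_of_mem ⟨le_refl _, hδpos⟩
  have hcond : ∀ q : ℝ, q ∈ Set.Ioo (0:ℝ) δ →
      0 < q ∧ q < 1 ∧ c*q ≤ 1/2 ∧ (1/c)*q ≤ 1/2 := by
    intro q ⟨hq0, hqδ⟩
    have h1 : q < 1/2 := lt_of_lt_of_le hqδ (min_le_left _ _)
    have h2 : q < 1/(2*(c+1)) := lt_of_lt_of_le hqδ ((min_le_right _ _).trans (min_le_left _ _))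
    have h3 : q < 1/(2*(1/c+1)) := lt_of_lt_of_le hqδ ((min_le_right _ _).trans (min_le_right _ _))
    refine ⟨hq0, by linarith, ?_, ?_⟩
    · have : q * (2*(c+1)) < 1 := by rw [lt_div_iff₀ (by positivity)] at h2; linarith
      nlinarith
    · have hc1 : (0:ℝ) < 1/c := by positivity
      have : q * (2*(1/c+1)) < 1 := by rw [lt_div_iff₀ (by positivity)] at h3; linarith
      nlinarith
  -- the eventual identity
  have hkey : ∀ q : ℝ, q ∈ Set.Ioo (0:ℝ) δ →
      q ^ ((n:ℝ)/2 + (m : ℝ)) * thetaFn q (c * q ^ (n:ℝ))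
        = (Real.sqrt c * q^n - 1/Real.sqrt c)
          * ((∏ i ∈ Finset.range n, ((1 - c*q^(n+i+1)) * (q^(n-1-i) - 1/c)))
            * ∏' i : ℕ, gg c (1/c) (2*n) 0 q i) := by
    intro q hq
    obtain ⟨hq0, hq1, hcq, hcq'⟩ := hcond q hq
    have hqn : (0:ℝ) < q^n := pow_pos hq0 n
    have hrn : c * q ^ ((n:ℝ)) = c * q^n := by rw [Real.rpow_natCast]
    -- the theta product splits
    set f : ℕ → ℝ := fun i => (1 - (c*q^n) * q^(i+1)) * (1 - q^(i+1)/(c*q^n)) with hf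
    have htail : ∀ i : ℕ, f (i+n) = gg c (1/c) (2*n) 0 q i := by
      intro i
      simp only [hf, gg]
      have l1 : c*q^n*q^(i+n+1) = c*q^(2*n+i+1) := by
        rw [mul_assoc, ← pow_add, show n + (i+n+1) = 2*n+i+1 by omega]
      have l2 : q^(i+n+1)/(c*q^n) = 1/c * q^(0+i+1) := by
        rw [show i+n+1 = (i+1)+n by omega, pow_add, mul_comm c (q^n), ← div_div,
          mul_div_assoc, div_self (pow_pos hq0 n).ne', mul_one, show 0+i+1 = i+1 by omega]
        ring
      rw [l1, l2]
    have hgP := gg_hasProd c (1/c) hc.le (by positivity) (2*n) 0 hq0 hq1 hcq hcq'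
    have hgT : HasProd (fun i => f (i+n)) (∏' i : ℕ, gg c (1/c) (2*n) 0 q i) := by
      rw [gg_tprod_eq c (1/c) hc.le (by positivity) (2*n) 0 hq0 hq1 hcq hcq']
      exact HasProd.congr_fun hgP (fun i => htail i)
    have hsplit : HasProd f ((∏ i ∈ Finset.range n, f i) * ∏' i : ℕ, gg c (1/c) (2*n) 0 q i) :=
      HasProd.prod_range_mul hgT
    have htp : ∏' i : ℕ, f i = (∏ i ∈ Finset.range n, f i) * ∏' i : ℕ, gg c (1/c) (2*n) 0 q i :=
      hsplit.tprod_eq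
    -- now compute
    have hEq : q ^ ((n:ℝ)/2 + (m:ℝ)) = q ^ ((n:ℝ)/2) * q^m := by
      rw [Real.rpow_add hq0, Real.rpow_natCast]
    have hqm : q^m * ∏ i ∈ Finset.range n, f i
        = ∏ i ∈ Finset.range n, ((1 - c*q^(n+i+1)) * (q^(n-1-i) - 1/c)) := by
      rw [hm, ← Finset.prod_pow_eq_pow_sum, ← Finset.prod_mul_distrib]
      apply Finset.prod_congr rfl
      intro i hi
      exact A2 n i c q hc hq0 (Finset.mem_range.1 hi)
    have hpre : q ^ ((n:ℝ)/2) * (Real.sqrt (c*q^n) - 1/Real.sqrt (c*q^n))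
        = Real.sqrt c * q^n - 1/Real.sqrt c := A1 n c q hc hq0
    rw [hrn]
    show q ^ ((n:ℝ)/2 + (m:ℝ)) * ((Real.sqrt (c*q^n) - 1/Real.sqrt (c*q^n)) * ∏' i : ℕ, f i) = _
    rw [htp, hEq, ← hpre, ← hqm]
    ring
  -- limits of the pieces
  have T1 : Tendsto (fun q : ℝ => Real.sqrt c * q^n - 1/Real.sqrt c) (𝓝[>] 0)
      (𝓝 (Real.sqrt c * 0^n - 1/Real.sqrt c)) := by
    apply Tendsto.mono_left _ nhdsWithin_le_nhds
    exact ((continuous_const.mul (continuous_pow n)).sub continuous_const).tendsto 0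
  have T2 : Tendsto (fun q : ℝ => ∏ i ∈ Finset.range n, ((1 - c*q^(n+i+1)) * (q^(n-1-i) - 1/c)))
      (𝓝[>] 0)
      (𝓝 (∏ i ∈ Finset.range n, ((0:ℝ)^(n-1-i) - 1/c))) := by
    have hcont : Continuous (fun q : ℝ => ∏ i ∈ Finset.range n, ((1 - c*q^(n+i+1)) * (q^(n-1-i) - 1/c))) := by
      apply continuous_finset_prod
      intro i _
      exact ((continuous_const.sub (continuous_const.mul (continuous_pow _))).mul
        ((continuous_pow _).sub continuous_const))
    have := (hcont.tendsto 0).mono_left (nhdsWithin_le_nhds : 𝓝[>] (0:ℝ) ≤ 𝓝 0)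
    convert this using 2
    apply Finset.prod_congr rfl
    intro i _
    rw [zero_pow (by omega : n+i+1 ≠ 0)]
    ring
  have T3 := gg_tendsto_one c (1/c) hc.le (by positivity) (2*n) 0
  have := T1.mul (T2.mul T3)
  rw [mul_one] at this
  apply this.congr'
  filter_upwards [hmem] with q hq
  exact (hkey q hq).symm


lemma prod_closed (k : ℕ) (c : ℝ) :
    ∏ i ∈ Finset.range (k+1), ((0:ℝ)^(k+1-1-i) - 1/c) = (-1/c)^k * (1 - 1/c) := by
  rw [Finset.prod_range_succ]
  congr 1
  · have : ∏ x ∈ Finset.range k, ((0:ℝ)^(k+1-1-x) - 1/c) = ∏ _x ∈ Finset.range k, (-1/c) := by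
      apply Finset.prod_congr rfl
      intro i hi
      have : k+1-1-i ≠ 0 := by have := Finset.mem_range.1 hi; omega
      rw [zero_pow this]; ring
    rw [this, Finset.prod_const, Finset.card_range]
  · norm_num

lemma rpow_helper (z : ℝ) (hz : 0 < z) (n : ℕ) :
    z ^ (-(n:ℝ)-1/2) = (z⁻¹)^n * (Real.sqrt z)⁻¹ := by
  rw [show -(n:ℝ)-1/2 = (-(n:ℝ)) + (-(1/2)) by ring, Real.rpow_add hz,
    Real.rpow_neg hz.le, Real.rpow_natCast, Real.rpow_neg hz.le,
    inv_pow, Real.sqrt_eq_rpow]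

lemma Lval (n : ℕ) (a z : ℝ) (ha : 0 < a) (ha1 : a ≠ 1) (hz : 0 < z) :
    ((Real.sqrt (z*a) * 0^n - 1/Real.sqrt (z*a)) * ∏ i ∈ Finset.range n, ((0:ℝ)^(n-1-i) - 1/(z*a)))
      / ((Real.sqrt a * 0^n - 1/Real.sqrt a) * ∏ i ∈ Finset.range n, ((0:ℝ)^(n-1-i) - 1/a))
    = ((1 - a*z)/(1-a)) * z ^ (-(n:ℝ)-1/2) := by
  have hs : 0 < Real.sqrt a := Real.sqrt_pos.2 ha
  have ht : 0 < Real.sqrt z := Real.sqrt_pos.2 hz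
  have hsz : Real.sqrt (z*a) = Real.sqrt z * Real.sqrt a := Real.sqrt_mul hz.le a
  have hs2 : Real.sqrt a ^ 2 = a := Real.sq_sqrt ha.le
  have ht2 : Real.sqrt z ^ 2 = z := Real.sq_sqrt hz.le
  have h1a : 1 - a ≠ 0 := fun h => ha1 (by linarith [sub_eq_zero.1 h])
  cases n with
  | zero =>
    rw [rpow_helper z hz 0]
    simp only [pow_zero, Finset.range_zero, Finset.prod_empty, mul_one, one_mul]
    rw [hsz]
    have hsa : Real.sqrt a * Real.sqrt a = a := Real.mul_self_sqrt ha.le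
    have htz : Real.sqrt z * Real.sqrt z = z := Real.mul_self_sqrt hz.le
    have hu : (Real.sqrt z * Real.sqrt a) * (Real.sqrt z * Real.sqrt a) = z*a := by
      linear_combination (Real.sqrt a * Real.sqrt a) * htz + z * hsa
    rw [div_eq_iff (by
      intro h
      apply h1a
      have h2 := sub_eq_zero.1 h
      have h4 : Real.sqrt a * Real.sqrt a = 1 := by
        nth_rewrite 1 [h2]; rw [one_div, inv_mul_cancel₀ hs.ne']
      rw [hsa] at h4
      linarith)]
    field_simp
    linear_combination (1-a) * hu + (a*z-1) * hsa
  | succ k =>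
    rw [rpow_helper z hz (k+1), prod_closed k (z*a), prod_closed k a]
    have hz0 : 0 ^ (k+1) = (0:ℝ) := zero_pow (by omega)
    rw [hz0]
    have hbase : (-1/(z*a)) = z⁻¹ * (-1/a) := by field_simp
    rw [hbase, mul_pow, hsz]
    have hXne : (-1/a)^k ≠ 0 := pow_ne_zero _ (by
      intro h; rw [div_eq_zero_iff] at h
      rcases h with h|h
      · norm_num at h
      · exact ha.ne' h)
    have hsa : Real.sqrt a * Real.sqrt a = a := Real.mul_self_sqrt ha.le
    have htz : Real.sqrt z * Real.sqrt z = z := Real.mul_self_sqrt hz.le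
    rw [div_eq_iff (by
      apply mul_ne_zero
      · simp only [mul_zero, zero_sub, neg_ne_zero]
        positivity
      · apply mul_ne_zero hXne
        intro h
        apply ha1
        have h2 := sub_eq_zero.1 h
        field_simp at h2
        linarith)]
    field_simp
    ring_nf
    linear_combination (-(-(z⁻¹ ^ k * a * a⁻¹ ^ k * (-1) ^ k) + z⁻¹ ^ k * a⁻¹ ^ k * (-1) ^ k - z * z⁻¹ ^ k * a * a⁻¹ ^ k * (-1) ^ k + z * z⁻¹ ^ k * a ^ 2 * a⁻¹ ^ k * (-1) ^ k)) * (mul_inv_cancel₀ hz.ne' : z * z⁻¹ = 1)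



lemma main_nonneg (n : ℕ) (a z : ℝ) (ha : 0 < a) (ha1 : a ≠ 1) (hz : 0 < z) :
    Tendsto (fun q : ℝ => thetaFn q (z * a * q ^ (n:ℝ)) / thetaFn q (a * q ^ (n:ℝ)))
      (𝓝[>] 0) (𝓝 (((1 - a * z) / (1 - a)) * z ^ (-(n:ℝ) - 1/2))) := by
  have hza : 0 < z*a := mul_pos hz ha
  have hnum := theta_asymp n (z*a) hza
  have hden := theta_asymp n a ha
  have hs : 0 < Real.sqrt a := Real.sqrt_pos.2 ha
  have hpre_ne : Real.sqrt a * 0^n - 1/Real.sqrt a ≠ 0 := by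
    cases n with
    | zero =>
      simp only [pow_zero, mul_one]
      intro h
      apply ha1
      have h2 := sub_eq_zero.1 h
      have h4 : Real.sqrt a * Real.sqrt a = 1 := by
        nth_rewrite 1 [h2]; rw [one_div, inv_mul_cancel₀ hs.ne']
      rw [Real.mul_self_sqrt ha.le] at h4
      linarith
    | succ k =>
      rw [zero_pow (Nat.succ_ne_zero k), mul_zero, zero_sub, neg_ne_zero]
      positivity
  have hprod_ne : (∏ i ∈ Finset.range n, ((0:ℝ)^(n-1-i) - 1/a)) ≠ 0 := by
    apply Finset.prod_ne_zero_iff.2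
    intro i hi
    rcases eq_or_ne (n-1-i) 0 with h|h
    · rw [h, pow_zero]
      intro hc
      apply ha1
      have h2 := sub_eq_zero.1 hc
      field_simp at h2
      linarith
    · rw [zero_pow h, zero_sub, neg_ne_zero]
      positivity
  have hLden : ((Real.sqrt a * 0^n - 1/Real.sqrt a)
      * ∏ i ∈ Finset.range n, ((0:ℝ)^(n-1-i) - 1/a)) ≠ 0 := mul_ne_zero hpre_ne hprod_ne
  have hdiv := hnum.div hden hLden
  rw [← Lval n a z ha ha1 hz]
  apply Tendsto.congr' _ hdiv
  filter_upwards [self_mem_nhdsWithin] with q hq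
  exact mul_div_mul_left _ _ (Real.rpow_pos_of_pos hq _).ne'

lemma theta_inv (q x : ℝ) : thetaFn q x⁻¹ = - thetaFn q x := by
  unfold thetaFn
  have h2 : ∀ i : ℕ, (1 - x⁻¹ * q^(i+1)) * (1 - q^(i+1)/x⁻¹)
      = (1 - x*q^(i+1)) * (1 - q^(i+1)/x) := by
    intro i
    field_simp
  rw [tprod_congr h2, Real.sqrt_inv, one_div, inv_inv, one_div]
  ring

/-- For an integer `w`, `a, z > 0` with `a ≠ 1`, the limit as `q → 0⁺` of
`θ_q(z·a·q^w)/θ_q(a·q^w)` exists and equals `((1 − a·z)/(1 − a))·z^{−w − 1/2}`. -/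
theorem thetaFn_ratio_limit_integral (w : ℤ) (a z : ℝ) (ha : 0 < a) (ha1 : a ≠ 1)
    (hz : 0 < z) :
    Tendsto (fun q : ℝ => thetaFn q (z * a * q ^ (w : ℝ)) / thetaFn q (a * q ^ (w : ℝ)))
      (𝓝[>] (0 : ℝ)) (𝓝 (((1 - a * z) / (1 - a)) * z ^ (-(w : ℝ) - 1 / 2))) := by
  rcases le_or_gt 0 w with hw | hw
  · obtain ⟨n, rfl⟩ := Int.eq_ofNat_of_zero_le hw
    simpa only [Int.cast_natCast] using main_nonneg n a z ha ha1 hz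
  · set n : ℕ := (-w).toNat with hndef
    have hn : (n:ℤ) = -w := Int.toNat_of_nonneg (by omega)
    have hnr : (n:ℝ) = -(w:ℝ) := by exact_mod_cast congrArg (fun m : ℤ => (m:ℝ)) hn
    have ha' : 0 < a⁻¹ := inv_pos.2 ha
    have ha1' : a⁻¹ ≠ 1 := fun h => ha1 (by rw [← inv_inv a, inv_eq_one.2 (inv_eq_one.1 h)]; exact inv_one)
    have hz' : 0 < z⁻¹ := inv_pos.2 hz
    have H := main_nonneg n a⁻¹ z⁻¹ ha' ha1' hz'
    have hfun : (fun q : ℝ => thetaFn q (z⁻¹ * a⁻¹ * q ^ (n:ℝ)) / thetaFn q (a⁻¹ * q ^ (n:ℝ)))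
        =ᶠ[𝓝[>] (0:ℝ)]
        (fun q : ℝ => thetaFn q (z * a * q ^ (w:ℝ)) / thetaFn q (a * q ^ (w:ℝ))) := by
      filter_upwards [self_mem_nhdsWithin] with q hq
      have hq0 : (0:ℝ) < q := hq
      have hexp : q ^ (w:ℝ) = (q ^ (n:ℝ))⁻¹ := by
        rw [← Real.rpow_neg hq0.le]
        congr 1
        rw [hnr]; ring
      have e1 : z * a * q ^ (w:ℝ) = (z⁻¹ * a⁻¹ * q ^ (n:ℝ))⁻¹ := by
        rw [mul_inv, mul_inv, inv_inv, inv_inv, hexp]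
      have e2 : a * q ^ (w:ℝ) = (a⁻¹ * q ^ (n:ℝ))⁻¹ := by
        rw [mul_inv, inv_inv, hexp]
      rw [e1, e2, theta_inv, theta_inv, neg_div_neg_eq]
    have hval : ((1 - a⁻¹ * z⁻¹) / (1 - a⁻¹)) * (z⁻¹) ^ (-(n:ℝ) - 1/2)
        = ((1 - a*z)/(1-a)) * z ^ (-(w:ℝ) - 1/2) := by
      have key : (z⁻¹) ^ (-(n:ℝ)-1/2) = z ^ (-(w:ℝ)+1/2) := by
        rw [Real.inv_rpow hz.le, ← Real.rpow_neg hz.le]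
        congr 1
        rw [hnr]; ring
      have split : z ^ (-(w:ℝ)+1/2) = z ^ (-(w:ℝ)-1/2) * z := by
        rw [show -(w:ℝ)+1/2 = (-(w:ℝ)-1/2)+1 by ring, Real.rpow_add hz, Real.rpow_one]
      have h1a : (1:ℝ) - a⁻¹ ≠ 0 := by
        intro h
        apply ha1'
        linarith [sub_eq_zero.1 h]
      have hC : (1 - a⁻¹*z⁻¹)/(1 - a⁻¹) * z = (1 - a*z)/(1-a) := by
        have h1a' : (1:ℝ) - a ≠ 0 := fun h => ha1 (by linarith [sub_eq_zero.1 h])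
        rw [div_mul_eq_mul_div, div_eq_div_iff h1a h1a']
        field_simp
        ring
      rw [key, split]
      linear_combination (z ^ (-(w:ℝ)-1/2)) * hC
    rw [← hval]
    exact Tendsto.congr' hfun H
end

section
/- Let b be a positive integer and let w be a real number with b·w ∈ ℤ. Let p = Σ_k c_k a^k and p' = Σ_k c'_k a^k be Laurent polynomials with integer coefficients (finitely many nonzero c_k, c'_k, k ∈ ℤ) such that p ≡ p' modulo (a^b − 1), i.e. for every residue r modulo b one has Σ_{k ≡ r (mod b)} c_k = Σ_{k ≡ r (mod b)} c'_k. Then Σ_k c_k·⌊k·w⌋ − Σ_k c'_k·⌊k·w⌋ = w·(Σ_k c_k·k − Σ_k c'_k·k). -/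
/-- Let `b > 0` and `w ∈ ℝ` with `b·w ∈ ℤ`. If two integer Laurent polynomials
`p = Σ c_k aᵏ`, `p' = Σ c'_k aᵏ` agree modulo `a^b − 1` (i.e. for every residue `r`
mod `b`, `Σ_{k ≡ r} c_k = Σ_{k ≡ r} c'_k`), then
`Σ_k c_k ⌊k w⌋ − Σ_k c'_k ⌊k w⌋ = w·(Σ_k c_k k − Σ_k c'_k k)`. -/
theorem floor_sum_difference_of_congruent_laurent
    (b : ℕ) (hb : 0 < b) (w : ℝ) (hw : ∃ p : ℤ, (b : ℝ) * w = p)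
    (c c' : ℤ →₀ ℤ)
    (hmod : ∀ r : ZMod b,
      ∑ k ∈ c.support.filter (fun k : ℤ => ((k : ZMod b) = r)), c k =
      ∑ k ∈ c'.support.filter (fun k : ℤ => ((k : ZMod b) = r)), c' k) :
    ((∑ k ∈ c.support, (c k : ℝ) * (⌊(k : ℝ) * w⌋ : ℝ)) -
        ∑ k ∈ c'.support, (c' k : ℝ) * (⌊(k : ℝ) * w⌋ : ℝ)) =
      w * ((∑ k ∈ c.support, (c k : ℝ) * (k : ℝ)) -
        ∑ k ∈ c'.support, (c' k : ℝ) * (k : ℝ)) := by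
  haveI : NeZero b := ⟨hb.ne'⟩
  obtain ⟨p, hp⟩ := hw
  set f : ℤ → ℝ := fun k => (⌊(k : ℝ) * w⌋ : ℝ) - (k : ℝ) * w with hf
  have hper : ∀ k m : ℤ, f (k + b * m) = f k := by
    intro k m
    have h1 : ((k + b * m : ℤ) : ℝ) * w = (k : ℝ) * w + (m * p : ℤ) := by
      push_cast
      rw [← hp]; ring
    simp only [hf, h1, Int.floor_add_intCast]
    push_cast
    ring
  have hF : ∀ k : ℤ, f k = f (((k : ZMod b).val : ℤ)) := by
    intro k
    have hv : (((k : ZMod b).val : ℤ)) = k % b := ZMod.val_intCast k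
    have : k = ((k : ZMod b).val : ℤ) + b * (k / b) := by
      rw [hv]; exact (Int.emod_add_mul_ediv k b).symm
    conv_lhs => rw [this]
    exact hper _ _
  set F : ZMod b → ℝ := fun r => f ((r.val : ℤ)) with hFdef
  have key : ∀ d : ℤ →₀ ℤ,
      ∑ k ∈ d.support, (d k : ℝ) * f k =
      ∑ r : ZMod b, ((∑ k ∈ d.support.filter (fun k : ℤ => ((k : ZMod b) = r)), d k : ℤ) : ℝ) * F r := by
    intro d
    rw [← Finset.sum_fiberwise_of_maps_to (g := fun k : ℤ => (k : ZMod b))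
      (fun x _ => Finset.mem_univ _) (fun k => (d k : ℝ) * f k)]
    refine Finset.sum_congr rfl fun r _ => ?_
    rw [Int.cast_sum, Finset.sum_mul]
    refine Finset.sum_congr rfl fun k hk => ?_
    have hkr : (k : ZMod b) = r := (Finset.mem_filter.mp hk).2
    rw [hF k, hkr]
  have hsum : ∑ k ∈ c.support, (c k : ℝ) * f k = ∑ k ∈ c'.support, (c' k : ℝ) * f k := by
    rw [key, key]
    refine Finset.sum_congr rfl fun r _ => ?_
    rw [hmod r]
  have expand : ∀ d : ℤ →₀ ℤ,
      ∑ k ∈ d.support, (d k : ℝ) * f k =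
      (∑ k ∈ d.support, (d k : ℝ) * (⌊(k : ℝ) * w⌋ : ℝ)) -
        ∑ k ∈ d.support, (d k : ℝ) * ((k : ℝ) * w) := by
    intro d
    rw [← Finset.sum_sub_distrib]
    exact Finset.sum_congr rfl fun k _ => by simp [hf]; ring
  have := hsum
  rw [expand, expand] at this
  have h2 : ∀ d : ℤ →₀ ℤ, ∑ k ∈ d.support, (d k : ℝ) * ((k : ℝ) * w) =
      w * ∑ k ∈ d.support, (d k : ℝ) * (k : ℝ) := by
    intro d
    rw [Finset.mul_sum]
    exact Finset.sum_congr rfl fun k _ => by ring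
  rw [h2, h2] at this
  linarith [this]
end

section
/- Let λ be a Young diagram with n cells, and let c_1, …, c_n be the contents of its cells. Then the following identity of Laurent polynomials in ℤ[a, a^{-1}] holds: Σ_{i,j=1}^{n} (a^{c_i − c_j + 1} + a^{c_j − c_i − 1} − a^{c_i − c_j} − a^{c_j − c_i}) + Σ_{i=1}^{n} (a^{c_i} + a^{−c_i}) = Σ_{□ ∈ λ} (a^{hook_λ(□)} + a^{−hook_λ(□)}). -/
open LaurentPolynomial

/-- The content of a cell `(i, j)` (row `i`, column `j`): `c(i,j) = i − j`. -/
def cellContent (c : ℕ × ℕ) : ℤ := (c.1 : ℤ) - (c.2 : ℤ)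

/-- The hook length of a cell in a Young diagram: `arm + leg + 1`, where
`arm = #{(i, j') ∈ μ : j' > j}` and `leg = #{(i', j) ∈ μ : i' > i}`. -/
def hookLength (μ : YoungDiagram) (c : ℕ × ℕ) : ℤ :=
  ((μ.cells.filter (fun p => p.1 = c.1 ∧ c.2 < p.2)).card : ℤ) +
    ((μ.cells.filter (fun p => p.2 = c.2 ∧ c.1 < p.1)).card : ℤ) + 1

open Finset

namespace HookAux

noncomputable def Esum (s : ℤ) (n : ℕ) : LaurentPolynomial ℤ :=
  ∑ t ∈ Finset.range n, T (s + t)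

@[simp] lemma Esum_zero (s : ℤ) : Esum s 0 = 0 := by simp [Esum]

lemma Esum_succ_top (s : ℤ) (n : ℕ) : Esum s (n + 1) = Esum s n + T (s + n) := by
  simp [Esum, Finset.sum_range_succ]

lemma Esum_succ_bot (s : ℤ) (n : ℕ) : Esum s (n + 1) = T s + Esum (s + 1) n := by
  rw [Esum, Finset.sum_range_succ']
  rw [add_comm]
  congr 1
  · simp
  · apply Finset.sum_congr rfl; intro t _; congr 1; push_cast; ring

lemma Esum_add (s : ℤ) (m n : ℕ) : Esum s (m + n) = Esum s m + Esum (s + m) n := by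
  induction n with
  | zero => simp
  | succ k ih =>
      rw [← Nat.add_assoc, Esum_succ_top, ih, Esum_succ_top, add_assoc]
      congr 2
      push_cast; ring

lemma Esum_congr {s s' : ℤ} (n : ℕ) (h : s = s') : Esum s n = Esum s' n := by rw [h]

/-- reflection homomorphism `T k ↦ T (-k)`. -/
noncomputable def rev : LaurentPolynomial ℤ →+ LaurentPolynomial ℤ :=
  { toFun := AddMonoidAlgebra.mapDomain Neg.neg, map_zero' := AddMonoidAlgebra.mapDomain_zero _,
    map_add' := AddMonoidAlgebra.mapDomain_add _ }

@[simp] lemma rev_T (k : ℤ) : rev (T k) = T (-k) := by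
  show AddMonoidAlgebra.mapDomain Neg.neg (AddMonoidAlgebra.single k (1 : ℤ)) = AddMonoidAlgebra.single (-k) (1 : ℤ)
  exact AddMonoidAlgebra.mapDomain_single

lemma rev_Esum (s : ℤ) (n : ℕ) : rev (Esum s n) = Esum (1 - s - n) n := by
  rw [Esum, map_sum, Esum]
  rw [← Finset.sum_range_reflect]
  apply Finset.sum_congr rfl
  intro t ht
  rw [rev_T]
  congr 1
  rw [Finset.mem_range] at ht
  have : ((n - 1 - t : ℕ) : ℤ) = (n : ℤ) - 1 - t := by omega
  rw [this]; ring


lemma Tc {a b : ℤ} (h : a = b) : (T a : LaurentPolynomial ℤ) = T b := by rw [h]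

lemma Esum_shift (x : ℤ) (n : ℕ) : T x + Esum (x + 1) n = Esum x n + T (x + n) := by
  have h1 := Esum_succ_bot x n
  have h2 := Esum_succ_top x n
  linear_combination h2 - h1

lemma Esum_comm (x : ℤ) (p q : ℕ) : Esum x p + Esum (x + p) q = Esum x q + Esum (x + q) p := by
  have a := Esum_add x p q
  have b := Esum_add x q p
  rw [Nat.add_comm q p] at b
  linear_combination b - a

/-- The per-row step identity. -/
lemma PI (s : ℤ) (m L : ℕ) :
    Esum (s+1) L + T (s+L-m) + Esum (-s-L) L + T ((m:ℤ)-s-L) + Esum (1-s) m + Esum (s-m) m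
      + T (-s) + T s
    = T (s+L) + T (-s-L) + Esum (s+1-m) L + Esum (1-s-L) m + Esum ((m:ℤ)-s-L) L
      + Esum (s+L-m) m + T ((m:ℤ)-s) + T (s-m) := by
  have c1a : Esum (s+1-m) m + Esum (s+1) L = Esum (s+1-m) L + Esum (s+1-m+L) m := by
    have h := Esum_comm (s+1-m) m L
    rw [show s+1-(m:ℤ)+m = s+1 by ring] at h
    exact h
  have c1b : Esum (s+1-m+L) m + T (s+L-m) = Esum (s+L-m) m + T (s+L) := by
    have h := Esum_shift (s+L-m) m
    rw [show s+(L:ℤ)-m+1 = s+1-m+L by ring, show s+(L:ℤ)-m+m = s+L by ring] at h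
    linear_combination h
  have c2a : Esum (-s-L) L + Esum (-s) m = Esum (-s-L) m + Esum ((m:ℤ)-s-L) L := by
    have h := Esum_comm (-s-L) L m
    rw [show -s-(L:ℤ)+L = -s by ring, show -s-(L:ℤ)+m = (m:ℤ)-s-L by ring] at h
    exact h
  have c2b : T (-s-L) + Esum (1-s-L) m = Esum (-s-L) m + T ((m:ℤ)-s-L) := by
    have h := Esum_shift (-s-L) m
    rw [show -s-(L:ℤ)+1 = 1-s-L by ring, show -s-(L:ℤ)+m = (m:ℤ)-s-L by ring] at h
    exact h
  have r1 : T (-s) + Esum (1-s) m = Esum (-s) m + T ((m:ℤ)-s) := by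
    have h := Esum_shift (-s) m
    rw [show -s+(1:ℤ) = 1-s by ring, show -s+(m:ℤ) = (m:ℤ)-s by ring] at h
    exact h
  have r2 : T (s-m) + Esum (s+1-m) m = Esum (s-m) m + T s := by
    have h := Esum_shift (s-m) m
    rw [show s-(m:ℤ)+1 = s+1-m by ring, show s-(m:ℤ)+m = s by ring] at h
    exact h
  linear_combination c1a + c1b + c2a - c2b + r1 - r2

/-- The global step identity. -/
lemma GLOB (m r q : ℕ) :
    Esum 1 m + Esum ((r:ℤ)-m+1) m + Esum (1-(q:ℤ)) q + Esum (-(m:ℤ)) m + Esum (-(r:ℤ)) m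
      + Esum 0 q + Esum ((m:ℤ)-r) r + Esum (1-(m:ℤ)) r
    = Esum (1-(q:ℤ)) (m+q) + Esum (1-(m:ℤ)) m + Esum (-(m:ℤ)) (m+q) + Esum 0 m
      + Esum 1 r + Esum (-(r:ℤ)) r := by
  have a1 : Esum (1-(q:ℤ)) (m+q) = Esum (1-(q:ℤ)) q + Esum 1 m := by
    rw [Nat.add_comm m q, Esum_add]
    congr 1
    exact Esum_congr m (by ring)
  have a2 : Esum (-(m:ℤ)) (m+q) = Esum (-(m:ℤ)) m + Esum 0 q := by
    rw [Esum_add]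
    congr 1
    exact Esum_congr q (by ring)
  have a3 : Esum (-(r:ℤ)) m + Esum ((m:ℤ)-r) r = Esum (-(r:ℤ)) r + Esum 0 m := by
    have h := Esum_comm (-(r:ℤ)) m r
    rw [show -(r:ℤ)+m = (m:ℤ)-r by ring, show -(r:ℤ)+r = (0:ℤ) by ring] at h
    exact h
  have a4 : Esum (1-(m:ℤ)) r + Esum ((r:ℤ)-m+1) m = Esum (1-(m:ℤ)) m + Esum 1 r := by
    have h := Esum_comm (1-(m:ℤ)) r m
    rw [show 1-(m:ℤ)+r = (r:ℤ)-m+1 by ring, show 1-(m:ℤ)+m = (1:ℤ) by ring] at h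
    exact h
  linear_combination -a1 - a2 + a3 + a4


/-- The full induction-step identity. -/
lemma SSTEP (r m er : ℕ) (ℓ : ℕ → ℕ) (her : er ≤ r) :
    (∑ i ∈ range r,
        (Esum ((r:ℤ)-i+1) (ℓ i) + T ((r:ℤ)-i+(ℓ i)-m) + Esum (1-((r:ℤ)-i)) m))
  + (∑ i ∈ range r,
        (Esum (-((r:ℤ)-i)-(ℓ i)) (ℓ i) + T ((m:ℤ)-((r:ℤ)-i)-(ℓ i)) + Esum (((r:ℤ)-i)-m) m))
  + (Esum 1 m + Esum ((r:ℤ)-m+1) m + Esum ((er:ℤ)-r) (r+1-er))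
  + (Esum (-(m:ℤ)) m + Esum (-(r:ℤ)) m + Esum 0 (r+1-er))
  = (∑ i ∈ range r,
        (T ((r:ℤ)-i+(ℓ i)) + Esum ((r:ℤ)-i+1-m) (ℓ i) + Esum (1-((r:ℤ)-i)-(ℓ i)) m))
  + (∑ i ∈ range r,
        (T (-((r:ℤ)-i)-(ℓ i)) + Esum ((m:ℤ)-((r:ℤ)-i)-(ℓ i)) (ℓ i) + Esum (((r:ℤ)-i)+(ℓ i)-m) m))
  + (Esum ((er:ℤ)-r) (m+(r+1-er)) + Esum (1-(m:ℤ)) m)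
  + (Esum (-(m:ℤ)) (m+(r+1-er)) + Esum 0 m) := by
  have hq : (1 - ((r+1-er : ℕ):ℤ)) = (er:ℤ) - r := by omega
  have hG := GLOB m r (r+1-er)
  rw [show (1 - ((r+1-er : ℕ):ℤ)) = (er:ℤ) - r from hq] at hG
  have hPI : ∑ i ∈ range r,
      (Esum (((r:ℤ)-i)+1) (ℓ i) + T (((r:ℤ)-i)+(ℓ i)-m) + Esum (-((r:ℤ)-i)-(ℓ i)) (ℓ i)
        + T ((m:ℤ)-((r:ℤ)-i)-(ℓ i)) + Esum (1-((r:ℤ)-i)) m + Esum (((r:ℤ)-i)-m) m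
        + T (-((r:ℤ)-i)) + T ((r:ℤ)-i))
      = ∑ i ∈ range r,
      (T (((r:ℤ)-i)+(ℓ i)) + T (-((r:ℤ)-i)-(ℓ i)) + Esum (((r:ℤ)-i)+1-m) (ℓ i)
        + Esum (1-((r:ℤ)-i)-(ℓ i)) m + Esum ((m:ℤ)-((r:ℤ)-i)-(ℓ i)) (ℓ i)
        + Esum (((r:ℤ)-i)+(ℓ i)-m) m + T ((m:ℤ)-((r:ℤ)-i)) + T (((r:ℤ)-i)-m)) :=
    Finset.sum_congr rfl (fun i _ => PI ((r:ℤ)-i) m (ℓ i))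
  have S1 : ∑ i ∈ range r, T (-((r:ℤ)-i)) = Esum (-(r:ℤ)) r := by
    rw [Esum]; exact Finset.sum_congr rfl fun i hi => Tc (by push_cast; ring)
  have S2 : ∑ i ∈ range r, T ((r:ℤ)-i) = Esum 1 r := by
    apply Eq.symm
    rw [Esum, ← Finset.sum_range_reflect]
    refine Finset.sum_congr rfl fun i hi => Tc ?_
    have := Finset.mem_range.mp hi
    omega
  have S3 : ∑ i ∈ range r, T ((m:ℤ)-((r:ℤ)-i)) = Esum ((m:ℤ)-r) r := by
    rw [Esum]; exact Finset.sum_congr rfl fun i hi => Tc (by push_cast; ring)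
  have S4 : ∑ i ∈ range r, T (((r:ℤ)-i)-m) = Esum (1-(m:ℤ)) r := by
    apply Eq.symm
    rw [Esum, ← Finset.sum_range_reflect]
    refine Finset.sum_congr rfl fun i hi => Tc ?_
    have := Finset.mem_range.mp hi
    omega
  simp only [Finset.sum_add_distrib] at hPI ⊢
  linear_combination hPI + hG - S1 - S2 + S3 + S4


noncomputable def XX (r : ℕ) (ℓ : ℕ → ℕ) : LaurentPolynomial ℤ :=
  ∑ i ∈ range r,
    ((∑ i' ∈ range r, Esum ((i:ℤ)-i'+1) (ℓ i')) + Esum ((i:ℤ)-(ℓ i)+1) (ℓ i)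
      + ∑ k ∈ (range r).filter (fun k => ℓ k ≤ ℓ i), T (((ℓ i:ℤ) - i) - ((ℓ k:ℤ) - k)))

noncomputable def YY (r : ℕ) (ℓ e : ℕ → ℕ) : LaurentPolynomial ℤ :=
  ∑ i ∈ range r,
    (Esum ((e i:ℤ)-i) (ℓ i + (r - e i))
      + ∑ i' ∈ range r, Esum ((i:ℤ)-i'+1-(ℓ i)) (ℓ i'))

lemma SMAIN (r : ℕ) (ℓ e : ℕ → ℕ) :
    (∀ k k', k ≤ k' → k' < r → ℓ k' ≤ ℓ k) →
    (∀ i k, i < r → k < r → (ℓ k ≤ ℓ i ↔ e i ≤ k)) →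
    XX r ℓ + rev (XX r ℓ) = YY r ℓ e + rev (YY r ℓ e) := by
  induction r with
  | zero => intro _ _; simp [XX, YY]
  | succ r IH =>
    intro hant he
    have hml : ∀ i, i < r → ℓ r ≤ ℓ i := fun i hi => hant i r (le_of_lt hi) (Nat.lt_succ_self r)
    have her : e r ≤ r := (he r r (Nat.lt_succ_self r) (Nat.lt_succ_self r)).mp (le_refl _)
    have hfe : (range (r+1)).filter (fun k => ℓ k ≤ ℓ r) = Finset.Ico (e r) (r+1) := by
      ext k
      simp only [Finset.mem_filter, Finset.mem_range, Finset.mem_Ico]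
      constructor
      · rintro ⟨hk, hlk⟩; exact ⟨(he r k (Nat.lt_succ_self r) hk).mp hlk, hk⟩
      · rintro ⟨h1, h2⟩; exact ⟨h2, (he r k (Nat.lt_succ_self r) h2).mpr h1⟩
    have hT : ∑ t ∈ range (r+1-(e r)), T (((ℓ r:ℤ)) - r - ((ℓ (e r + t):ℤ) - ((e r + t : ℕ):ℤ)))
        = Esum ((e r:ℤ)-r) (r+1-(e r)) := by
      rw [Esum]
      refine Finset.sum_congr rfl fun t ht => ?_
      have ht' := Finset.mem_range.mp ht
      have hle : e r + t ≤ r := by omega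
      have h1 : ℓ (e r + t) = ℓ r :=
        le_antisymm ((he r (e r + t) (Nat.lt_succ_self r) (by omega)).mpr (Nat.le_add_right _ _))
          (hant (e r + t) r hle (Nat.lt_succ_self r))
      rw [h1]
      exact Tc (by push_cast; ring)
    have hbr : ∀ i ∈ Finset.range r,
        ((∑ i' ∈ range (r+1), Esum ((i:ℤ)-i'+1) (ℓ i')) + Esum ((i:ℤ)-(ℓ i)+1) (ℓ i)
          + ∑ k ∈ (range (r+1)).filter (fun k => ℓ k ≤ ℓ i), T (((ℓ i:ℤ) - i) - ((ℓ k:ℤ) - k)))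
        = (((∑ i' ∈ range r, Esum ((i:ℤ)-i'+1) (ℓ i')) + Esum ((i:ℤ)-(ℓ i)+1) (ℓ i)
          + ∑ k ∈ (range r).filter (fun k => ℓ k ≤ ℓ i), T (((ℓ i:ℤ) - i) - ((ℓ k:ℤ) - k)))
          + (Esum (1-((r:ℤ)-i)) (ℓ r) + T ((r:ℤ)-i+(ℓ i)-(ℓ r)))) := by
      intro i hi
      have hi' := Finset.mem_range.mp hi
      rw [Finset.sum_range_succ, Finset.range_add_one, Finset.filter_insert, if_pos (hml i hi'),
        Finset.sum_insert (by simp)]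
      rw [show Esum ((i:ℤ)-(r:ℤ)+1) (ℓ r) = Esum (1-((r:ℤ)-(i:ℤ))) (ℓ r) from Esum_congr _ (by ring),
        show (T (((ℓ i:ℤ) - i) - ((ℓ r:ℤ) - r)) : LaurentPolynomial ℤ)
            = T ((r:ℤ)-i+(ℓ i)-(ℓ r)) from Tc (by ring)]
      ring
    have hXX : XX (r+1) ℓ = XX r ℓ
        + ((∑ i ∈ range r, Esum ((r:ℤ)-i+1) (ℓ i)) + (∑ i ∈ range r, T ((r:ℤ)-i+(ℓ i)-(ℓ r)))
          + (∑ i ∈ range r, Esum (1-((r:ℤ)-i)) (ℓ r))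
          + (Esum 1 (ℓ r) + Esum ((r:ℤ)-(ℓ r)+1) (ℓ r) + Esum ((e r:ℤ)-r) (r+1-(e r)))) := by
      unfold XX
      rw [Finset.sum_range_succ, Finset.sum_congr rfl hbr]
      simp only [Finset.sum_add_distrib]
      rw [Finset.sum_range_succ, hfe, Finset.sum_Ico_eq_sum_range, hT,
        show Esum ((r:ℤ)-(r:ℤ)+1) (ℓ r) = Esum 1 (ℓ r) from Esum_congr _ (by ring)]
      ring
    have hbrY : ∀ i ∈ Finset.range r,
        (Esum ((e i:ℤ)-i) (ℓ i + (r+1 - e i))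
          + ∑ i' ∈ range (r+1), Esum ((i:ℤ)-i'+1-(ℓ i)) (ℓ i'))
        = ((Esum ((e i:ℤ)-i) (ℓ i + (r - e i))
          + ∑ i' ∈ range r, Esum ((i:ℤ)-i'+1-(ℓ i)) (ℓ i'))
          + (T ((r:ℤ)-i+(ℓ i)) + Esum (1-((r:ℤ)-i)-(ℓ i)) (ℓ r))) := by
      intro i hi
      have hi' := Finset.mem_range.mp hi
      have hei : e i ≤ i := (he i i (by omega) (by omega)).mp (le_refl _)
      have hei' : e i ≤ r := by omega
      rw [Finset.sum_range_succ,
        show ℓ i + (r+1 - e i) = (ℓ i + (r - e i)) + 1 from by omega,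
        Esum_succ_top,
        show ((e i:ℤ)-(i:ℤ)) + ((ℓ i + (r - e i) : ℕ):ℤ) = (r:ℤ)-i+(ℓ i) from by
          push_cast [Nat.cast_sub hei']; ring,
        show Esum ((i:ℤ)-(r:ℤ)+1-(ℓ i)) (ℓ r) = Esum (1-((r:ℤ)-(i:ℤ))-(ℓ i)) (ℓ r) from
          Esum_congr _ (by ring)]
      ring
    have hYY : YY (r+1) ℓ e = YY r ℓ e
        + ((∑ i ∈ range r, T ((r:ℤ)-i+(ℓ i))) + (∑ i ∈ range r, Esum (1-((r:ℤ)-i)-(ℓ i)) (ℓ r))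
          + (Esum ((e r:ℤ)-r) (ℓ r + (r+1 - e r)) + (∑ i ∈ range r, Esum ((r:ℤ)-i+1-(ℓ r)) (ℓ i))
            + Esum (1-(ℓ r:ℤ)) (ℓ r))) := by
      unfold YY
      rw [Finset.sum_range_succ, Finset.sum_congr rfl hbrY]
      simp only [Finset.sum_add_distrib]
      rw [Finset.sum_range_succ,
        show Esum ((r:ℤ)-(r:ℤ)+1-(ℓ r)) (ℓ r) = Esum (1-(ℓ r:ℤ)) (ℓ r) from Esum_congr _ (by ring)]
      ring
    have hv1 : rev (∑ i ∈ range r, Esum ((r:ℤ)-i+1) (ℓ i))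
        = ∑ i ∈ range r, Esum (-((r:ℤ)-i)-(ℓ i)) (ℓ i) := by
      rw [map_sum]
      exact Finset.sum_congr rfl fun i _ => by rw [rev_Esum]; exact Esum_congr _ (by push_cast; ring)
    have hv2 : rev (∑ i ∈ range r, T ((r:ℤ)-i+(ℓ i)-(ℓ r)))
        = ∑ i ∈ range r, T ((ℓ r:ℤ)-((r:ℤ)-i)-(ℓ i)) := by
      rw [map_sum]
      exact Finset.sum_congr rfl fun i _ => by rw [rev_T]; exact Tc (by ring)
    have hv3 : rev (∑ i ∈ range r, Esum (1-((r:ℤ)-i)) (ℓ r))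
        = ∑ i ∈ range r, Esum (((r:ℤ)-i)-(ℓ r)) (ℓ r) := by
      rw [map_sum]
      exact Finset.sum_congr rfl fun i _ => by rw [rev_Esum]; exact Esum_congr _ (by push_cast; ring)
    have hv4 : rev (Esum 1 (ℓ r)) = Esum (-(ℓ r:ℤ)) (ℓ r) := by
      rw [rev_Esum]; exact Esum_congr _ (by ring)
    have hv5 : rev (Esum ((r:ℤ)-(ℓ r)+1) (ℓ r)) = Esum (-(r:ℤ)) (ℓ r) := by
      rw [rev_Esum]; exact Esum_congr _ (by ring)
    have hv6 : rev (Esum ((e r:ℤ)-r) (r+1-(e r))) = Esum 0 (r+1-(e r)) := by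
      rw [rev_Esum]; exact Esum_congr _ (by omega)
    have hw1 : rev (∑ i ∈ range r, T ((r:ℤ)-i+(ℓ i)))
        = ∑ i ∈ range r, T (-((r:ℤ)-i)-(ℓ i)) := by
      rw [map_sum]
      exact Finset.sum_congr rfl fun i _ => by rw [rev_T]; exact Tc (by ring)
    have hw2 : rev (∑ i ∈ range r, Esum (1-((r:ℤ)-i)-(ℓ i)) (ℓ r))
        = ∑ i ∈ range r, Esum (((r:ℤ)-i)+(ℓ i)-(ℓ r)) (ℓ r) := by
      rw [map_sum]
      exact Finset.sum_congr rfl fun i _ => by rw [rev_Esum]; exact Esum_congr _ (by push_cast; ring)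
    have hw3 : rev (Esum ((e r:ℤ)-r) (ℓ r + (r+1 - e r)))
        = Esum (-(ℓ r:ℤ)) (ℓ r + (r+1-(e r))) := by
      rw [rev_Esum]; exact Esum_congr _ (by omega)
    have hw4 : rev (∑ i ∈ range r, Esum ((r:ℤ)-i+1-(ℓ r)) (ℓ i))
        = ∑ i ∈ range r, Esum ((ℓ r:ℤ)-((r:ℤ)-i)-(ℓ i)) (ℓ i) := by
      rw [map_sum]
      exact Finset.sum_congr rfl fun i _ => by rw [rev_Esum]; exact Esum_congr _ (by push_cast; ring)
    have hw5 : rev (Esum (1-(ℓ r:ℤ)) (ℓ r)) = Esum 0 (ℓ r) := by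
      rw [rev_Esum]; exact Esum_congr _ (by push_cast; ring)
    have hIH := IH (fun k k' hk hk' => hant k k' hk (Nat.lt_succ_of_lt hk'))
      (fun i k hi hk => he i k (Nat.lt_succ_of_lt hi) (Nat.lt_succ_of_lt hk))
    have hstep := SSTEP r (ℓ r) (e r) ℓ her
    simp only [Finset.sum_add_distrib] at hstep
    rw [hXX, hYY]
    simp only [map_add]
    rw [hv1, hv2, hv3, hv4, hv5, hv6, hw1, hw2, hw3, hw4, hw5]
    linear_combination hIH + hstep

open YoungDiagram in
lemma cells_eq (μ : YoungDiagram) :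
    μ.cells = ((Finset.range (μ.colLen 0)).sigma fun i => Finset.range (μ.rowLen i)).map
      ⟨fun p => (p.1, p.2), fun p q h => by cases p; cases q; simp_all⟩ := by
  ext ⟨a, b⟩
  simp only [YoungDiagram.mem_cells, Finset.mem_map, Finset.mem_sigma, Finset.mem_range,
    Function.Embedding.coeFn_mk]
  constructor
  · intro h
    exact ⟨⟨a, b⟩, ⟨YoungDiagram.mem_iff_lt_colLen.mp (μ.up_left_mem (le_refl a) (Nat.zero_le b) h),
      YoungDiagram.mem_iff_lt_rowLen.mp h⟩, rfl⟩
  · rintro ⟨⟨x, y⟩, ⟨hx, hy⟩, hxy⟩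
    obtain ⟨rfl, rfl⟩ : x = a ∧ y = b := Prod.ext_iff.mp hxy
    exact YoungDiagram.mem_iff_lt_rowLen.mpr hy

lemma cells_sum (μ : YoungDiagram) (f : ℕ × ℕ → LaurentPolynomial ℤ) :
    ∑ x ∈ μ.cells, f x
      = ∑ i ∈ Finset.range (μ.colLen 0), ∑ j ∈ Finset.range (μ.rowLen i), f (i, j) := by
  rw [cells_eq, Finset.sum_map, Finset.sum_sigma]
  rfl

lemma hook_eq (μ : YoungDiagram) {i j : ℕ} (h : (i, j) ∈ μ) :
    hookLength μ (i, j) = (μ.rowLen i : ℤ) + μ.colLen j - i - j - 1 := by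
  have hj : j < μ.rowLen i := YoungDiagram.mem_iff_lt_rowLen.mp h
  have hi : i < μ.colLen j := YoungDiagram.mem_iff_lt_colLen.mp h
  have harm : (μ.cells.filter (fun p => p.1 = i ∧ j < p.2)) =
      (Finset.Ioo j (μ.rowLen i)).map ⟨fun j' => (i, j'), fun a b hab => by simpa using hab⟩ := by
    ext ⟨a, b⟩
    simp only [Finset.mem_filter, YoungDiagram.mem_cells, Finset.mem_map, Finset.mem_Ioo,
      Function.Embedding.coeFn_mk]
    constructor
    · rintro ⟨hab, rfl, hb⟩
      exact ⟨b, ⟨hb, YoungDiagram.mem_iff_lt_rowLen.mp hab⟩, rfl⟩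
    · rintro ⟨x, ⟨h1, h2⟩, hx⟩
      obtain ⟨rfl, rfl⟩ : i = a ∧ x = b := Prod.ext_iff.mp hx
      exact ⟨YoungDiagram.mem_iff_lt_rowLen.mpr h2, rfl, h1⟩
  have hleg : (μ.cells.filter (fun p => p.2 = j ∧ i < p.1)) =
      (Finset.Ioo i (μ.colLen j)).map ⟨fun i' => (i', j), fun a b hab => by simpa using hab⟩ := by
    ext ⟨a, b⟩
    simp only [Finset.mem_filter, YoungDiagram.mem_cells, Finset.mem_map, Finset.mem_Ioo,
      Function.Embedding.coeFn_mk]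
    constructor
    · rintro ⟨hab, rfl, ha⟩
      exact ⟨a, ⟨ha, YoungDiagram.mem_iff_lt_colLen.mp hab⟩, rfl⟩
    · rintro ⟨x, ⟨h1, h2⟩, hx⟩
      obtain ⟨rfl, rfl⟩ : x = a ∧ j = b := Prod.ext_iff.mp hx
      exact ⟨YoungDiagram.mem_iff_lt_colLen.mpr h2, rfl, h1⟩
  have hdef : hookLength μ (i, j)
      = ((μ.cells.filter (fun p => p.1 = i ∧ j < p.2)).card : ℤ)
        + ((μ.cells.filter (fun p => p.2 = j ∧ i < p.1)).card : ℤ) + 1 := rfl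
  rw [hdef, harm, hleg, Finset.card_map, Finset.card_map, Nat.card_Ioo, Nat.card_Ioo]
  omega

lemma ROW (μ : YoungDiagram) (i : ℕ) : ∀ d, d ≤ μ.rowLen i →
    Esum ((μ.colLen (μ.rowLen i) : ℤ) - i)
        ((μ.colLen (μ.rowLen i - d) - μ.colLen (μ.rowLen i)) + d)
      = (∑ j ∈ Finset.Ico (μ.rowLen i - d) (μ.rowLen i),
          T ((μ.rowLen i : ℤ) + μ.colLen j - i - j - 1))
        + ∑ k ∈ Finset.Ico (μ.colLen (μ.rowLen i)) (μ.colLen (μ.rowLen i - d)),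
            T (((μ.rowLen i : ℤ) - i) - ((μ.rowLen k : ℤ) - k)) := by
  intro d
  induction d with
  | zero => simp
  | succ d ih =>
    intro hd
    have hd' : d ≤ μ.rowLen i := by omega
    have hj1 : μ.rowLen i - (d+1) + 1 = μ.rowLen i - d := by omega
    have hc1 : μ.colLen (μ.rowLen i - d) ≤ μ.colLen (μ.rowLen i - (d+1)) :=
      μ.colLen_anti _ _ (by omega)
    have hc2 : μ.colLen (μ.rowLen i) ≤ μ.colLen (μ.rowLen i - d) :=
      μ.colLen_anti _ _ (by omega)
    have hsplit : (μ.colLen (μ.rowLen i - (d+1)) - μ.colLen (μ.rowLen i)) + (d+1)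
        = ((μ.colLen (μ.rowLen i - d) - μ.colLen (μ.rowLen i)) + d)
          + ((μ.colLen (μ.rowLen i - (d+1)) - μ.colLen (μ.rowLen i - d)) + 1) := by omega
    rw [hsplit, Esum_add, ih hd', Esum_succ_top]
    -- the extra k-block
    have hk : Esum (((μ.colLen (μ.rowLen i) : ℤ) - i)
          + (((μ.colLen (μ.rowLen i - d) - μ.colLen (μ.rowLen i)) + d : ℕ) : ℤ))
          (μ.colLen (μ.rowLen i - (d+1)) - μ.colLen (μ.rowLen i - d))
        = ∑ k ∈ Finset.Ico (μ.colLen (μ.rowLen i - d)) (μ.colLen (μ.rowLen i - (d+1))),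
            T (((μ.rowLen i : ℤ) - i) - ((μ.rowLen k : ℤ) - k)) := by
      rw [Finset.sum_Ico_eq_sum_range, Esum]
      refine Finset.sum_congr rfl fun t ht => ?_
      have ht' := Finset.mem_range.mp ht
      have hklt : μ.colLen (μ.rowLen i - d) + t < μ.colLen (μ.rowLen i - (d+1)) := by omega
      have hmem : (μ.colLen (μ.rowLen i - d) + t, μ.rowLen i - (d+1)) ∈ μ :=
        YoungDiagram.mem_iff_lt_colLen.mpr hklt
      have hge : μ.rowLen i - (d+1) < μ.rowLen (μ.colLen (μ.rowLen i - d) + t) :=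
        YoungDiagram.mem_iff_lt_rowLen.mp hmem
      have hnmem : ¬ ((μ.colLen (μ.rowLen i - d) + t, μ.rowLen i - d) ∈ μ) := by
        rw [YoungDiagram.mem_iff_lt_colLen]; omega
      have hle : ¬ (μ.rowLen i - d < μ.rowLen (μ.colLen (μ.rowLen i - d) + t)) := by
        intro hcon
        exact hnmem (YoungDiagram.mem_iff_lt_rowLen.mpr hcon)
      have hlk : μ.rowLen (μ.colLen (μ.rowLen i - d) + t) = μ.rowLen i - d := by omega
      rw [hlk]
      exact Tc (by omega)
    rw [hk]
    have hjsum : ∑ j ∈ Finset.Ico (μ.rowLen i - (d+1)) (μ.rowLen i),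
          (T ((μ.rowLen i : ℤ) + μ.colLen j - i - j - 1) : LaurentPolynomial ℤ)
        = T ((μ.rowLen i : ℤ) + μ.colLen (μ.rowLen i - (d+1)) - i - ((μ.rowLen i - (d+1) : ℕ) : ℤ) - 1)
          + ∑ j ∈ Finset.Ico (μ.rowLen i - d) (μ.rowLen i),
              T ((μ.rowLen i : ℤ) + μ.colLen j - i - j - 1) := by
      rw [Finset.sum_eq_sum_Ico_succ_bot (by omega : μ.rowLen i - (d+1) < μ.rowLen i), hj1]
    have hksum : ∑ k ∈ Finset.Ico (μ.colLen (μ.rowLen i)) (μ.colLen (μ.rowLen i - (d+1))),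
          (T (((μ.rowLen i : ℤ) - i) - ((μ.rowLen k : ℤ) - k)) : LaurentPolynomial ℤ)
        = (∑ k ∈ Finset.Ico (μ.colLen (μ.rowLen i)) (μ.colLen (μ.rowLen i - d)),
            T (((μ.rowLen i : ℤ) - i) - ((μ.rowLen k : ℤ) - k)))
          + ∑ k ∈ Finset.Ico (μ.colLen (μ.rowLen i - d)) (μ.colLen (μ.rowLen i - (d+1))),
              T (((μ.rowLen i : ℤ) - i) - ((μ.rowLen k : ℤ) - k)) :=
      (Finset.sum_Ico_consecutive _ hc2 hc1).symm
    rw [hjsum, hksum,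
      show T (((μ.colLen (μ.rowLen i) : ℤ) - i)
            + (((μ.colLen (μ.rowLen i - d) - μ.colLen (μ.rowLen i)) + d : ℕ) : ℤ)
            + (((μ.colLen (μ.rowLen i - (d+1)) - μ.colLen (μ.rowLen i - d) : ℕ)) : ℤ))
          = T ((μ.rowLen i : ℤ) + μ.colLen (μ.rowLen i - (d+1)) - i - ((μ.rowLen i - (d+1) : ℕ) : ℤ) - 1)
        from Tc (by omega)]
    ring


lemma sum_T_desc (u : ℤ) (n : ℕ) :
    ∑ j ∈ Finset.range n, (T (u - j) : LaurentPolynomial ℤ) = Esum (u - n + 1) n := by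
  apply Eq.symm
  rw [Esum, ← Finset.sum_range_reflect]
  refine Finset.sum_congr rfl fun j hj => Tc ?_
  have := Finset.mem_range.mp hj
  omega

lemma tele (u : ℤ) (n : ℕ) :
    ∑ j ∈ Finset.range n, ((T (u - j) - T (u - j - 1)) : LaurentPolynomial ℤ)
      = T u - T (u - n) := by
  induction n with
  | zero => simp
  | succ k ih =>
    rw [Finset.sum_range_succ, ih,
      show (T (u - ((k+1 : ℕ) : ℤ)) : LaurentPolynomial ℤ) = T (u - k - 1) from Tc (by push_cast; ring)]
    ring

lemma step3 (μ : YoungDiagram) (c : ℤ) :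
    ∑ x ∈ μ.cells, ((T (cellContent x - c + 1) - T (cellContent x - c)) : LaurentPolynomial ℤ)
      = ∑ i ∈ Finset.range (μ.colLen 0), ((T ((i:ℤ) - c + 1) - T ((i:ℤ) - c + 1 - μ.rowLen i)) : LaurentPolynomial ℤ) := by
  rw [cells_sum μ (fun x => (T (cellContent x - c + 1) - T (cellContent x - c)))]
  refine Finset.sum_congr rfl fun i _ => ?_
  have hc : ∀ j ∈ Finset.range (μ.rowLen i),
      ((T (cellContent (i,j) - c + 1) - T (cellContent (i,j) - c)) : LaurentPolynomial ℤ)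
        = (T (((i:ℤ) - c + 1) - j) - T (((i:ℤ) - c + 1) - j - 1)) := by
    intro j _
    rw [Tc (show cellContent (i,j) - c + 1 = ((i:ℤ) - c + 1) - j by
          show ((i:ℤ) - (j:ℤ)) - c + 1 = ((i:ℤ) - c + 1) - j; ring),
        Tc (show cellContent (i,j) - c = ((i:ℤ) - c + 1) - j - 1 by
          show ((i:ℤ) - (j:ℤ)) - c = ((i:ℤ) - c + 1) - j - 1; ring)]
  rw [Finset.sum_congr rfl hc, tele ((i:ℤ) - c + 1) (μ.rowLen i)]

lemma hAB (μ : YoungDiagram) :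
    ∑ x ∈ μ.cells, ∑ y ∈ μ.cells,
        ((T (cellContent x - cellContent y + 1) - T (cellContent x - cellContent y)) : LaurentPolynomial ℤ)
      = (∑ i ∈ Finset.range (μ.colLen 0), ∑ i' ∈ Finset.range (μ.colLen 0),
          Esum ((i:ℤ)-i'+1) (μ.rowLen i'))
        - ∑ i ∈ Finset.range (μ.colLen 0), ∑ i' ∈ Finset.range (μ.colLen 0),
            Esum ((i:ℤ)-i'+1-(μ.rowLen i)) (μ.rowLen i') := by
  rw [Finset.sum_comm]
  rw [cells_sum μ (fun y => ∑ x ∈ μ.cells,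
    ((T (cellContent x - cellContent y + 1) - T (cellContent x - cellContent y)) : LaurentPolynomial ℤ))]
  have h4 : ∀ i' ∈ Finset.range (μ.colLen 0),
      (∑ j' ∈ Finset.range (μ.rowLen i'), ∑ x ∈ μ.cells,
        ((T (cellContent x - cellContent (i',j') + 1) - T (cellContent x - cellContent (i',j'))) : LaurentPolynomial ℤ))
      = ∑ i ∈ Finset.range (μ.colLen 0), ∑ j' ∈ Finset.range (μ.rowLen i'),
          ((T ((i:ℤ) - cellContent (i',j') + 1) - T ((i:ℤ) - cellContent (i',j') + 1 - μ.rowLen i)) : LaurentPolynomial ℤ) := by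
    intro i' _
    rw [Finset.sum_congr rfl fun j' (_ : j' ∈ Finset.range (μ.rowLen i')) => step3 μ (cellContent (i',j'))]
    exact Finset.sum_comm
  rw [Finset.sum_congr rfl h4, Finset.sum_comm]
  have h6 : ∀ i ∈ Finset.range (μ.colLen 0),
      (∑ i' ∈ Finset.range (μ.colLen 0), ∑ j' ∈ Finset.range (μ.rowLen i'),
        ((T ((i:ℤ) - cellContent (i',j') + 1) - T ((i:ℤ) - cellContent (i',j') + 1 - μ.rowLen i)) : LaurentPolynomial ℤ))
      = ∑ i' ∈ Finset.range (μ.colLen 0),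
          (Esum ((i:ℤ)-i'+1) (μ.rowLen i') - Esum ((i:ℤ)-i'+1-(μ.rowLen i)) (μ.rowLen i')) := by
    intro i _
    refine Finset.sum_congr rfl fun i' _ => ?_
    rw [Finset.sum_sub_distrib]
    congr 1
    · rw [Esum]
      refine Finset.sum_congr rfl fun j' _ => Tc ?_
      show (i:ℤ) - ((i':ℤ) - (j':ℤ)) + 1 = ((i:ℤ)-i'+1) + j'
      ring
    · rw [Esum]
      refine Finset.sum_congr rfl fun j' _ => Tc ?_
      show (i:ℤ) - ((i':ℤ) - (j':ℤ)) + 1 - μ.rowLen i = ((i:ℤ)-i'+1-(μ.rowLen i)) + j'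
      ring
  rw [Finset.sum_congr rfl h6]
  simp only [Finset.sum_sub_distrib]

lemma hCC (μ : YoungDiagram) :
    ∑ x ∈ μ.cells, (T (cellContent x) : LaurentPolynomial ℤ)
      = ∑ i ∈ Finset.range (μ.colLen 0), Esum ((i:ℤ) - (μ.rowLen i) + 1) (μ.rowLen i) := by
  rw [cells_sum μ (fun x => T (cellContent x))]
  refine Finset.sum_congr rfl fun i _ => ?_
  have hc : ∀ j ∈ Finset.range (μ.rowLen i),
      (T (cellContent (i,j)) : LaurentPolynomial ℤ) = T ((i:ℤ) - j) := fun j _ => rfl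
  rw [Finset.sum_congr rfl hc, sum_T_desc]

lemma hHrow (μ : YoungDiagram) :
    (∑ x ∈ μ.cells, (T (hookLength μ x) : LaurentPolynomial ℤ))
      + ∑ i ∈ Finset.range (μ.colLen 0),
          ∑ k ∈ (Finset.range (μ.colLen 0)).filter (fun k => μ.rowLen k ≤ μ.rowLen i),
            T (((μ.rowLen i:ℤ) - i) - ((μ.rowLen k:ℤ) - k))
    = ∑ i ∈ Finset.range (μ.colLen 0),
        Esum ((μ.colLen (μ.rowLen i) : ℤ) - i) (μ.rowLen i + (μ.colLen 0 - μ.colLen (μ.rowLen i))) := by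
  rw [cells_sum μ (fun x => T (hookLength μ x))]
  have hrow : ∀ i ∈ Finset.range (μ.colLen 0),
      (∑ j ∈ Finset.range (μ.rowLen i), (T (hookLength μ (i,j)) : LaurentPolynomial ℤ))
        = ∑ j ∈ Finset.range (μ.rowLen i), T ((μ.rowLen i : ℤ) + μ.colLen j - i - j - 1) :=
    fun i _ => Finset.sum_congr rfl fun j hj => by
      rw [hook_eq μ (YoungDiagram.mem_iff_lt_rowLen.mpr (Finset.mem_range.mp hj))]
  rw [Finset.sum_congr rfl hrow, ← Finset.sum_add_distrib]
  refine Finset.sum_congr rfl fun i hi => ?_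
  have hfil : (Finset.range (μ.colLen 0)).filter (fun k => μ.rowLen k ≤ μ.rowLen i)
      = Finset.Ico (μ.colLen (μ.rowLen i)) (μ.colLen 0) := by
    ext k
    simp only [Finset.mem_filter, Finset.mem_range, Finset.mem_Ico]
    have hiff : μ.rowLen k ≤ μ.rowLen i ↔ μ.colLen (μ.rowLen i) ≤ k := by
      constructor
      · intro h
        by_contra hcon
        push_neg at hcon
        have := YoungDiagram.mem_iff_lt_rowLen.mp (YoungDiagram.mem_iff_lt_colLen.mpr hcon)
        omega
      · intro h
        by_contra hcon
        push_neg at hcon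
        have := YoungDiagram.mem_iff_lt_colLen.mp (YoungDiagram.mem_iff_lt_rowLen.mpr hcon)
        omega
    tauto
  rw [hfil]
  have hR := ROW μ i (μ.rowLen i) (le_refl _)
  rw [Nat.sub_self, ← Finset.range_eq_Ico] at hR
  rw [show μ.rowLen i + (μ.colLen 0 - μ.colLen (μ.rowLen i))
      = (μ.colLen 0 - μ.colLen (μ.rowLen i)) + μ.rowLen i from Nat.add_comm _ _]
  linear_combination -hR

end HookAux

open HookAux

/-- For a Young diagram `μ` with `n` cells of contents `c_1, …, c_n`, the identity of
Laurent polynomials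
`Σ_{i,j} (a^{c_i−c_j+1} + a^{c_j−c_i−1} − a^{c_i−c_j} − a^{c_j−c_i}) + Σ_i (a^{c_i} + a^{−c_i})
 = Σ_{□∈μ} (a^{hook(□)} + a^{−hook(□)})`. -/
theorem tangent_character_eq_hook_character (n : ℕ) (μ : YoungDiagram)
    (hn : μ.cells.card = n) :
    (∑ x ∈ μ.cells, ∑ y ∈ μ.cells,
        ((T (cellContent x - cellContent y + 1) + T (cellContent y - cellContent x - 1)
          - T (cellContent x - cellContent y) - T (cellContent y - cellContent x))
            : LaurentPolynomial ℤ))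
      + ∑ x ∈ μ.cells, (T (cellContent x) + T (-(cellContent x)))
    = ∑ x ∈ μ.cells, (T (hookLength μ x) + T (-(hookLength μ x))) := by
  classical
  have hant : ∀ k k', k ≤ k' → k' < μ.colLen 0 → μ.rowLen k' ≤ μ.rowLen k :=
    fun k k' h _ => μ.rowLen_anti k k' h
  have he : ∀ i k, i < μ.colLen 0 → k < μ.colLen 0 →
      (μ.rowLen k ≤ μ.rowLen i ↔ (fun i => μ.colLen (μ.rowLen i)) i ≤ k) := by
    intro i k _ _
    simp only
    constructor
    · intro h
      by_contra hcon
      push_neg at hcon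
      have := YoungDiagram.mem_iff_lt_rowLen.mp (YoungDiagram.mem_iff_lt_colLen.mpr hcon)
      omega
    · intro h
      by_contra hcon
      push_neg at hcon
      have := YoungDiagram.mem_iff_lt_colLen.mp (YoungDiagram.mem_iff_lt_rowLen.mpr hcon)
      omega
  have hSM := SMAIN (μ.colLen 0) μ.rowLen (fun i => μ.colLen (μ.rowLen i)) hant he
  have hab := hAB μ
  have hcc := hCC μ
  have hhr := hHrow μ
  have key : ((∑ x ∈ μ.cells, ∑ y ∈ μ.cells,
        ((T (cellContent x - cellContent y + 1) - T (cellContent x - cellContent y))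
          : LaurentPolynomial ℤ))
        + ∑ x ∈ μ.cells, (T (cellContent x) : LaurentPolynomial ℤ))
        - (∑ x ∈ μ.cells, (T (hookLength μ x) : LaurentPolynomial ℤ))
      = XX (μ.colLen 0) μ.rowLen
        - YY (μ.colLen 0) μ.rowLen (fun i => μ.colLen (μ.rowLen i)) := by
    simp only [XX, YY, Finset.sum_add_distrib]
    linear_combination hab + hcc - hhr
  have h3 : (XX (μ.colLen 0) μ.rowLen
        - YY (μ.colLen 0) μ.rowLen (fun i => μ.colLen (μ.rowLen i)))
      + rev (XX (μ.colLen 0) μ.rowLen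
        - YY (μ.colLen 0) μ.rowLen (fun i => μ.colLen (μ.rowLen i))) = 0 := by
    rw [map_sub]
    linear_combination hSM
  have h2 : (∑ x ∈ μ.cells, ∑ y ∈ μ.cells,
        ((T (cellContent x - cellContent y + 1) - T (cellContent x - cellContent y))
          : LaurentPolynomial ℤ))
        + ∑ x ∈ μ.cells, (T (cellContent x) : LaurentPolynomial ℤ)
      = (∑ x ∈ μ.cells, (T (hookLength μ x) : LaurentPolynomial ℤ))
        + (XX (μ.colLen 0) μ.rowLen
          - YY (μ.colLen 0) μ.rowLen (fun i => μ.colLen (μ.rowLen i))) := by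
    linear_combination key
  have key2 : ((∑ x ∈ μ.cells, ∑ y ∈ μ.cells,
        ((T (cellContent x - cellContent y + 1) - T (cellContent x - cellContent y))
          : LaurentPolynomial ℤ))
        + ∑ x ∈ μ.cells, (T (cellContent x) : LaurentPolynomial ℤ))
      + (rev (∑ x ∈ μ.cells, ∑ y ∈ μ.cells,
          ((T (cellContent x - cellContent y + 1) - T (cellContent x - cellContent y))
            : LaurentPolynomial ℤ))
        + rev (∑ x ∈ μ.cells, (T (cellContent x) : LaurentPolynomial ℤ)))
      = (∑ x ∈ μ.cells, (T (hookLength μ x) : LaurentPolynomial ℤ))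
        + rev (∑ x ∈ μ.cells, (T (hookLength μ x) : LaurentPolynomial ℤ)) := by
    rw [← map_add, h2, map_add, map_sub]
    rw [map_sub] at h3
    linear_combination h3
  have hrev1 : rev (∑ x ∈ μ.cells, ∑ y ∈ μ.cells,
        ((T (cellContent x - cellContent y + 1) - T (cellContent x - cellContent y))
          : LaurentPolynomial ℤ))
      = ∑ x ∈ μ.cells, ∑ y ∈ μ.cells,
          ((T (cellContent y - cellContent x - 1) - T (cellContent y - cellContent x))
            : LaurentPolynomial ℤ) := by
    rw [map_sum]
    refine Finset.sum_congr rfl fun x _ => ?_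
    rw [map_sum]
    refine Finset.sum_congr rfl fun y _ => ?_
    rw [map_sub, rev_T, rev_T,
      Tc (show -(cellContent x - cellContent y + 1) = cellContent y - cellContent x - 1 by ring),
      Tc (show -(cellContent x - cellContent y) = cellContent y - cellContent x by ring)]
  have hrev2 : rev (∑ x ∈ μ.cells, (T (cellContent x) : LaurentPolynomial ℤ))
      = ∑ x ∈ μ.cells, (T (-(cellContent x)) : LaurentPolynomial ℤ) := by
    rw [map_sum]
    exact Finset.sum_congr rfl fun x _ => rev_T _
  have hrev3 : rev (∑ x ∈ μ.cells, (T (hookLength μ x) : LaurentPolynomial ℤ))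
      = ∑ x ∈ μ.cells, (T (-(hookLength μ x)) : LaurentPolynomial ℤ) := by
    rw [map_sum]
    exact Finset.sum_congr rfl fun x _ => rev_T _
  have hsplitL : ∑ x ∈ μ.cells, ∑ y ∈ μ.cells,
        ((T (cellContent x - cellContent y + 1) + T (cellContent y - cellContent x - 1)
          - T (cellContent x - cellContent y) - T (cellContent y - cellContent x))
            : LaurentPolynomial ℤ)
      = (∑ x ∈ μ.cells, ∑ y ∈ μ.cells,
          ((T (cellContent x - cellContent y + 1) - T (cellContent x - cellContent y))
            : LaurentPolynomial ℤ))
        + ∑ x ∈ μ.cells, ∑ y ∈ μ.cells,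
            ((T (cellContent y - cellContent x - 1) - T (cellContent y - cellContent x))
              : LaurentPolynomial ℤ) := by
    rw [← Finset.sum_add_distrib]
    refine Finset.sum_congr rfl fun x _ => ?_
    rw [← Finset.sum_add_distrib]
    refine Finset.sum_congr rfl fun y _ => ?_
    ring
  have hsplitL2 : ∑ x ∈ μ.cells, ((T (cellContent x) + T (-(cellContent x))) : LaurentPolynomial ℤ)
      = (∑ x ∈ μ.cells, (T (cellContent x) : LaurentPolynomial ℤ))
        + ∑ x ∈ μ.cells, (T (-(cellContent x)) : LaurentPolynomial ℤ) :=
    Finset.sum_add_distrib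
  have hsplitR : ∑ x ∈ μ.cells, ((T (hookLength μ x) + T (-(hookLength μ x))) : LaurentPolynomial ℤ)
      = (∑ x ∈ μ.cells, (T (hookLength μ x) : LaurentPolynomial ℤ))
        + ∑ x ∈ μ.cells, (T (-(hookLength μ x)) : LaurentPolynomial ℤ) :=
    Finset.sum_add_distrib
  rw [hsplitL, hsplitL2, hsplitR]
  linear_combination key2 - hrev1 - hrev2 + hrev3
end

section
/- Let b be a positive integer and w = p/b with p ∈ ℤ. Let λ and μ be Young diagrams of the same size n such that for every residue r modulo b, the number of cells of λ with content congruent to r modulo b equals the number of cells of μ with content congruent to r modulo b. For a Young diagram ν with contents c_1, …, c_n define F(ν) = Σ_{i,j=1}^{n} ⌊(c_i − c_j + 1)·w⌋ − Σ_{i,j=1}^{n} ⌊(c_i − c_j)·w⌋ + Σ_{i=1}^{n} ⌊c_i·w⌋. Then F(λ) − F(μ) = w·(d_λ − d_μ), where d_ν = Σ_{□∈ν} c(□). -/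
/-- `F(ν) = Σ_{i,j} ⌊(c_i − c_j + 1)·w⌋ − Σ_{i,j} ⌊(c_i − c_j)·w⌋ + Σ_i ⌊c_i·w⌋`, the
signed sum of floors over the characters of the Hilbert-scheme polarization at `ν`. -/
noncomputable def polarizationFloorSum (w : ℝ) (ν : YoungDiagram) : ℤ :=
  (∑ x ∈ ν.cells, ∑ y ∈ ν.cells,
      ⌊((cellContent x - cellContent y + 1 : ℤ) : ℝ) * w⌋)
    - (∑ x ∈ ν.cells, ∑ y ∈ ν.cells,
      ⌊((cellContent x - cellContent y : ℤ) : ℝ) * w⌋)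
    + ∑ x ∈ ν.cells, ⌊((cellContent x : ℤ) : ℝ) * w⌋

/-- Floor of an integer times `p/b` equals integer division. -/
lemma floor_int_mul_div (b : ℕ) (hb : 0 < b) (p m : ℤ) :
    ⌊((m : ℤ) : ℝ) * ((p : ℝ) / (b : ℝ))⌋ = (m * p) / (b : ℤ) := by
  have h : ((m : ℤ) : ℝ) * ((p : ℝ) / (b : ℝ)) = ((((m * p : ℤ) : ℚ) / ((b : ℕ) : ℚ) : ℚ) : ℝ) := by
    push_cast
    ring
  rw [h, Rat.floor_cast, Rat.floor_intCast_div_natCast]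

/-- If contents agree fiberwise mod `b`, sums of any residue-periodic function agree. -/
lemma sum_congr_of_counts (b : ℕ) (hb : 0 < b) (s t : Finset (ℕ × ℕ))
    (hmod : ∀ r : ZMod b,
      (s.filter (fun x => ((cellContent x : ZMod b) = r))).card =
      (t.filter (fun x => ((cellContent x : ZMod b) = r))).card)
    (G : ℤ → ℤ) (hG : ∀ m m' : ℤ, ((m : ZMod b) = (m' : ZMod b)) → G m = G m') :
    ∑ x ∈ s, G (cellContent x) = ∑ x ∈ t, G (cellContent x) := by
  haveI : NeZero b := ⟨hb.ne'⟩
  have key : ∀ u : Finset (ℕ × ℕ), ∑ x ∈ u, G (cellContent x)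
      = ∑ r : ZMod b,
          ((u.filter (fun x => ((cellContent x : ZMod b) = r))).card : ℤ) * G (r.val : ℤ) := by
    intro u
    rw [← Finset.sum_fiberwise u (fun x => ((cellContent x : ZMod b)))
      (fun x => G (cellContent x))]
    refine Finset.sum_congr rfl fun r _ => ?_
    have hconst : ∀ x ∈ u.filter (fun x => ((cellContent x : ZMod b) = r)),
        G (cellContent x) = G (r.val : ℤ) := by
      intro x hx
      have hx' := (Finset.mem_filter.mp hx).2
      refine hG _ _ ?_
      rw [hx']
      simp [ZMod.natCast_val, ZMod.intCast_cast]
    rw [Finset.sum_congr rfl hconst, Finset.sum_const, nsmul_eq_mul]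
  rw [key s, key t]
  exact Finset.sum_congr rfl fun r _ => by rw [hmod r]

/-- Periodicity base: shifting by a multiple of `b` shifts the floor by a multiple of `p`. -/
lemma floor_shift (b : ℕ) (hb : 0 < b) (p m k : ℤ) :
    ⌊((m + b * k : ℤ) : ℝ) * ((p : ℝ) / (b : ℝ))⌋
      = ⌊((m : ℤ) : ℝ) * ((p : ℝ) / (b : ℝ))⌋ + p * k := by
  have hb' : (b : ℝ) ≠ 0 := by exact_mod_cast hb.ne'
  have h : ((m + b * k : ℤ) : ℝ) * ((p : ℝ) / (b : ℝ))
      = ((m : ℤ) : ℝ) * ((p : ℝ) / (b : ℝ)) + ((p * k : ℤ) : ℝ) := by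
    push_cast
    field_simp
  rw [h, Int.floor_add_intCast]

lemma eq_add_mul_of_cast_eq (b : ℕ) {m m' : ℤ} (h : (m : ZMod b) = (m' : ZMod b)) :
    ∃ k : ℤ, m' = m + b * k := by
  obtain ⟨k, hk⟩ := Int.ModEq.dvd ((ZMod.intCast_eq_intCast_iff m m' b).mp h)
  exact ⟨k, by linarith⟩

/-- Let `b > 0`, `w = p/b` with `p ∈ ℤ`, and let `λ, μ` be Young diagrams of the same
size `n` having, for each residue `r` mod `b`, equally many cells with content `≡ r`.
Then `F(λ) − F(μ) = w·(d_λ − d_μ)`. -/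
theorem floor_index_difference_hilbert (b : ℕ) (hb : 0 < b) (p : ℤ) (n : ℕ)
    (lam mu : YoungDiagram) (hlam : lam.cells.card = n) (hmu : mu.cells.card = n)
    (hmod : ∀ r : ZMod b,
      (lam.cells.filter (fun x => ((cellContent x : ZMod b) = r))).card =
      (mu.cells.filter (fun x => ((cellContent x : ZMod b) = r))).card) :
    ((polarizationFloorSum ((p : ℝ) / (b : ℝ)) lam
        - polarizationFloorSum ((p : ℝ) / (b : ℝ)) mu : ℤ) : ℝ)
      = ((p : ℝ) / (b : ℝ)) *
        (((∑ x ∈ lam.cells, cellContent x : ℤ) : ℝ)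
          - ((∑ x ∈ mu.cells, cellContent x : ℤ) : ℝ)) := by
  set w : ℝ := (p : ℝ) / (b : ℝ) with hw
  set f : ℤ → ℤ := fun m => ⌊((m : ℤ) : ℝ) * w⌋ with hf
  have hfshift : ∀ m k : ℤ, f (m + b * k) = f m + p * k := by
    intro m k
    simp only [hf, hw]
    exact floor_shift b hb p m k
  have hfperiodic : ∀ m m' : ℤ, ((m : ZMod b) = (m' : ZMod b)) →
      ∀ c : ℤ, f (c - m + 1) - f (c - m) = f (c - m' + 1) - f (c - m') := by
    intro m m' h c
    obtain ⟨k, rfl⟩ := eq_add_mul_of_cast_eq b h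
    have h1 : c - (m + b * k) + 1 = (c - m + 1) + b * (-k) := by ring
    have h2 : c - (m + b * k) = (c - m) + b * (-k) := by ring
    rw [h1, h2, hfshift, hfshift]
    ring
  have hgper : ∀ m m' : ℤ, ((m : ZMod b) = (m' : ZMod b)) →
      (f (m + 1) - f m) = (f (m' + 1) - f m') := by
    intro m m' h
    obtain ⟨k, rfl⟩ := eq_add_mul_of_cast_eq b h
    have h1 : m + b * k + 1 = (m + 1) + b * k := by ring
    rw [h1, hfshift, hfshift]
    ring
  -- the double-sum parts agree for lam and mu
  have hdouble :
      (∑ x ∈ lam.cells, ∑ y ∈ lam.cells, (f (cellContent x - cellContent y + 1)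
          - f (cellContent x - cellContent y)))
      = (∑ x ∈ mu.cells, ∑ y ∈ mu.cells, (f (cellContent x - cellContent y + 1)
          - f (cellContent x - cellContent y))) := by
    have step1 :
        (∑ x ∈ lam.cells, ∑ y ∈ lam.cells, (f (cellContent x - cellContent y + 1)
            - f (cellContent x - cellContent y)))
        = (∑ x ∈ lam.cells, ∑ y ∈ mu.cells, (f (cellContent x - cellContent y + 1)
            - f (cellContent x - cellContent y))) := by
      rw [Finset.sum_comm]
      rw [Finset.sum_comm (s := lam.cells) (t := mu.cells)]
      exact sum_congr_of_counts b hb lam.cells mu.cells hmod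
        (fun d => ∑ x ∈ lam.cells, (f (cellContent x - d + 1) - f (cellContent x - d)))
        (fun m m' h => Finset.sum_congr rfl fun x _ => hfperiodic m m' h (cellContent x))
    have step2 :
        (∑ x ∈ lam.cells, ∑ y ∈ mu.cells, (f (cellContent x - cellContent y + 1)
            - f (cellContent x - cellContent y)))
        = (∑ x ∈ mu.cells, ∑ y ∈ mu.cells, (f (cellContent x - cellContent y + 1)
            - f (cellContent x - cellContent y))) := by
      refine sum_congr_of_counts b hb lam.cells mu.cells hmod
        (fun c => ∑ y ∈ mu.cells, (f (c - cellContent y + 1) - f (c - cellContent y)))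
        (fun m m' h => Finset.sum_congr rfl fun y _ => ?_)
      have hmy : ((m - cellContent y : ℤ) : ZMod b) = ((m' - cellContent y : ℤ) : ZMod b) := by
        push_cast
        rw [h]
      exact hgper (m - cellContent y) (m' - cellContent y) hmy
    rw [step1, step2]
  -- the single-sum part
  have hfval : ∀ m : ℤ, (b : ℤ) * f m = m * p - (m * p) % (b : ℤ) := by
    intro m
    have h1 : f m = (m * p) / (b : ℤ) := by
      simp only [hf, hw]
      exact floor_int_mul_div b hb p m
    have h2 := Int.mul_ediv_add_emod (m * p) (b : ℤ)
    rw [h1]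
    linarith
  have hremper : ∀ m m' : ℤ, ((m : ZMod b) = (m' : ZMod b)) →
      (m * p) % (b : ℤ) = (m' * p) % (b : ℤ) := by
    intro m m' h
    obtain ⟨k, rfl⟩ := eq_add_mul_of_cast_eq b h
    have : (m + b * k) * p = m * p + (b : ℤ) * (k * p) := by ring
    rw [this, Int.add_mul_emod_self_left]
  have hrem : ∑ x ∈ lam.cells, (cellContent x * p) % (b : ℤ)
      = ∑ x ∈ mu.cells, (cellContent x * p) % (b : ℤ) :=
    sum_congr_of_counts b hb lam.cells mu.cells hmod (fun m => (m * p) % (b : ℤ)) hremper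
  have e1 : ∀ u : Finset (ℕ × ℕ), (b : ℤ) * (∑ x ∈ u, f (cellContent x))
      = (∑ x ∈ u, cellContent x) * p - ∑ x ∈ u, (cellContent x * p) % (b : ℤ) := by
    intro u
    rw [Finset.mul_sum, Finset.sum_congr rfl (fun x _ => hfval (cellContent x)),
      Finset.sum_sub_distrib, ← Finset.sum_mul]
  have hsingle :
      (b : ℤ) * ((∑ x ∈ lam.cells, f (cellContent x)) - (∑ x ∈ mu.cells, f (cellContent x)))
      = p * ((∑ x ∈ lam.cells, cellContent x) - (∑ x ∈ mu.cells, cellContent x)) := by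
    rw [mul_sub, e1, e1, hrem]
    ring
  -- assemble
  have hb' : (b : ℝ) ≠ 0 := by
    exact_mod_cast hb.ne'
  have expand : ∀ ν : YoungDiagram,
      ((∑ x ∈ ν.cells, ∑ y ∈ ν.cells,
          ⌊((cellContent x - cellContent y + 1 : ℤ) : ℝ) * w⌋)
        - (∑ x ∈ ν.cells, ∑ y ∈ ν.cells,
          ⌊((cellContent x - cellContent y : ℤ) : ℝ) * w⌋))
      = ∑ x ∈ ν.cells, ∑ y ∈ ν.cells, (f (cellContent x - cellContent y + 1)
          - f (cellContent x - cellContent y)) := by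
    intro ν
    simp only [hf]
    rw [← Finset.sum_sub_distrib]
    exact Finset.sum_congr rfl fun x _ => (Finset.sum_sub_distrib ..).symm
  have hF : polarizationFloorSum w lam - polarizationFloorSum w mu
      = (∑ x ∈ lam.cells, f (cellContent x)) - (∑ x ∈ mu.cells, f (cellContent x)) := by
    unfold polarizationFloorSum
    have hl := expand lam
    have hm := expand mu
    simp only [hf] at hl hm hdouble ⊢
    linarith [hl, hm, hdouble]
  rw [hF]
  have hcast : ((b : ℕ) : ℝ) * (((∑ x ∈ lam.cells, f (cellContent x))
        - (∑ x ∈ mu.cells, f (cellContent x)) : ℤ) : ℝ)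
      = (p : ℝ) * (((∑ x ∈ lam.cells, cellContent x : ℤ) : ℝ)
        - ((∑ x ∈ mu.cells, cellContent x : ℤ) : ℝ)) := by
    exact_mod_cast congrArg (fun z : ℤ => (z : ℝ)) hsingle
  rw [hw, div_mul_eq_mul_div, eq_div_iff hb']
  push_cast at hcast ⊢
  linarith
end
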